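/- arXiv:2403.16484 — 3 statements merged into one kernel-verified Lean document; each statement's English description precedes it below -/
import Mathlib

section
/- For every odd integer n ≥ 1, the local antimagic chromatic number of the fan blade graph FB(n) equals 3, i.e., χ_la(FB(n)) = 3. -/
/-!
Write `n = 2m + 1` and let `ρ` be the cyclic shift `i ↦ i + m` of `{0, …, 2m}`; then
`i + ρ i` runs once through `[m, 3m]`. Label `uᵢwᵢ ↦ i + 1`, `xvᵢ ↦ 2n - ρ i`,
`xwᵢ ↦ 7m + 3 - (i + ρ i)`, `wᵢvᵢ ↦ 3n + 1 + ρ i`, `xuᵢ ↦ 5n - i`. These five families fill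
the consecutive blocks of `n` labels in `[1, 5n]`, and `FB(n)` has `5n` edges by the handshake
lemma, so this is a bijection. Every `uᵢ` and `vᵢ` receives `5n + 1`, every `wᵢ` receives
`13m + 8`, and the hub receives more than both, so three induced labels occur. Conversely the
triangle `u₀w₀x` forces three distinct induced labels in every local antimagic labeling.
-/
namespace LocalAntimagic

variable {V W : Type*}

/-- Induced vertex label: sum of edge labels over edges incident to `v`. -/
noncomputable def fplus (G : SimpleGraph V) (f : Sym2 V → ℕ) (v : V) : ℕ :=
  ∑ᶠ e ∈ G.incidenceSet v, f e

/-- `f` is a local antimagic labeling of `G`: a bijection from the edge set onto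
`{1, …, q}` (`q` the number of edges) whose induced vertex labels distinguish
adjacent vertices. -/
def IsLocalAntimagic (G : SimpleGraph V) (f : Sym2 V → ℕ) : Prop :=
  Set.BijOn f G.edgeSet (Set.Icc 1 G.edgeSet.ncard) ∧
  ∀ ⦃u w : V⦄, G.Adj u w → fplus G f u ≠ fplus G f w

/-- The local antimagic chromatic number: the least number of distinct induced
vertex labels over all local antimagic labelings. -/
noncomputable def chiLA (G : SimpleGraph V) : ℕ :=
  sInf {c : ℕ | ∃ f : Sym2 V → ℕ, IsLocalAntimagic G f ∧ (Set.range (fplus G f)).ncard = c}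

/-- `n` disjoint copies of the path `P₃`; in copy `i`, vertex `(i,0) = uᵢ`,
`(i,1) = wᵢ`, `(i,2) = vᵢ`. -/
def nP3 (n : ℕ) : SimpleGraph (Fin n × Fin 3) :=
  SimpleGraph.fromRel (fun x y => x.1 = y.1 ∧ ((x.2 = 0 ∧ y.2 = 1) ∨ (x.2 = 1 ∧ y.2 = 2)))

/-- Join of two graphs on disjoint vertex sets. -/
def joinG {α β : Type*} (G : SimpleGraph α) (H : SimpleGraph β) : SimpleGraph (α ⊕ β) :=
  SimpleGraph.fromRel (fun x y =>
    match x, y with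
    | Sum.inl a, Sum.inl b => G.Adj a b
    | Sum.inr a, Sum.inr b => H.Adj a b
    | Sum.inl _, Sum.inr _ => True
    | Sum.inr _, Sum.inl _ => False)

/-- Disjoint union of two graphs. -/
def disjUnionG {α β : Type*} (G : SimpleGraph α) (H : SimpleGraph β) : SimpleGraph (α ⊕ β) :=
  SimpleGraph.fromRel (fun x y =>
    match x, y with
    | Sum.inl a, Sum.inl b => G.Adj a b
    | Sum.inr a, Sum.inr b => H.Adj a b
    | _, _ => False)

/-- `m` disjoint copies of `G`. -/
def copies (m : ℕ) (G : SimpleGraph V) : SimpleGraph (Fin m × V) :=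
  SimpleGraph.fromRel (fun x y => x.1 = y.1 ∧ G.Adj x.2 y.2)

/-- The fan blade graph `FB(n) = nP₃ ∨ O₁`. -/
def FB (n : ℕ) : SimpleGraph ((Fin n × Fin 3) ⊕ Fin 1) :=
  joinG (nP3 n) ⊥

/-- The graph obtained from `G` by merging vertices according to `p` (fibers of
`p` are merged into single vertices). -/
def mergeMap (G : SimpleGraph V) (p : V → W) : SimpleGraph W :=
  SimpleGraph.fromRel (fun a b => ∃ x y, G.Adj x y ∧ p x = a ∧ p y = b)

/-- No two distinct vertices of `S` are adjacent or share a common neighbor. -/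
def NoCommon (G : SimpleGraph V) (S : Set V) : Prop :=
  ∀ x ∈ S, ∀ y ∈ S, x ≠ y → ¬ G.Adj x y ∧ ∀ z, ¬ (G.Adj x z ∧ G.Adj y z)

/-- `P` is a partition of the set `S` into nonempty blocks. -/
def IsPartitionOn (S : Set V) (P : Set (Set V)) : Prop :=
  (∀ B ∈ P, B ⊆ S) ∧ (∀ v ∈ S, ∃! B, B ∈ P ∧ v ∈ B) ∧ ∀ B ∈ P, B.Nonempty

/-- `p` identifies exactly the vertices lying in a common block of `P`,
and nothing else; `p` is surjective so the codomain is exactly the merged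
vertex set. -/
def IsMergeOf (P : Set (Set V)) (p : V → W) : Prop :=
  Function.Surjective p ∧ ∀ x y : V, p x = p y ↔ (x = y ∨ ∃ B ∈ P, x ∈ B ∧ y ∈ B)


/-- The diamond fan `DF(2s)`: two copies (`c = 0,1`) of `sP₃`, plus two hub
vertices `y = Sum.inr 0` and `z = Sum.inr 1`; in copy `c`, blade `j`, position
`0,2` are the degree-1 endpoints and `1` the middle vertex of the path. -/
def DF2 (s : ℕ) : SimpleGraph ((Fin 2 × Fin s × Fin 3) ⊕ Fin 2) :=
  SimpleGraph.fromRel (fun x y =>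
    match x, y with
    | Sum.inl a, Sum.inl b =>
        a.1 = b.1 ∧ a.2.1 = b.2.1 ∧ ((a.2.2 = 0 ∧ b.2.2 = 1) ∨ (a.2.2 = 1 ∧ b.2.2 = 2))
    | Sum.inl a, Sum.inr j =>
        (j = 0 ∧ ((a.1 = 0 ∧ a.2.2 ≠ 1) ∨ (a.1 = 1 ∧ a.2.2 = 1))) ∨
        (j = 1 ∧ ((a.1 = 1 ∧ a.2.2 ≠ 1) ∨ (a.1 = 0 ∧ a.2.2 = 1)))
    | _, _ => False)

abbrev DFVert (r s : ℕ) :=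
  (Fin r × ((Fin 2 × Fin s × Fin 3) ⊕ Fin 2)) ⊕ ((Fin s × Fin 3) ⊕ Fin 1)

/-- Peanut graph `Pt(n)`: `Sum.inl (i, 0) = u_{i+1}`, `Sum.inl (i, 1) = v_{i+1}`
for `0 ≤ i ≤ 2n`, and `Sum.inr 0 = x`, `Sum.inr 1 = y`. -/
abbrev PtVert (n : ℕ) := (Fin (2*n+1) × Fin 2) ⊕ Fin 2

def Pt (n : ℕ) : SimpleGraph (PtVert n) :=
  SimpleGraph.fromRel (fun a b =>
    match a, b with
    | Sum.inl p, Sum.inl q =>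
        (p.2 = q.2 ∧ (p.1 : ℕ) + 1 = (q.1 : ℕ)) ∨
        (p.1 = q.1 ∧ (p.1 : ℕ) % 2 = 0 ∧ p.2 = 0 ∧ q.2 = 1)
    | Sum.inr j, Sum.inl p => (j = 0 ∧ (p.1 : ℕ) = 0) ∨ (j = 1 ∧ (p.1 : ℕ) = 2*n)
    | _, _ => False)

/-- Triangular bracelet `TB(n)`: `Sum.inl (j, 0) = u_{2j+1}`,
`Sum.inl (j, 1) = v_{2j+1}` for `0 ≤ j ≤ n`, and `Sum.inr j = z_{2j}`. -/
abbrev TBVert (n : ℕ) := (Fin (n+1) × Fin 2) ⊕ Fin (n+1)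

def TB (n : ℕ) : SimpleGraph (TBVert n) :=
  SimpleGraph.fromRel (fun a b =>
    match a, b with
    | Sum.inl p, Sum.inl q => p.1 = q.1 ∧ p.2 = 0 ∧ q.2 = 1
    | Sum.inr j, Sum.inl p =>
        (p.1 : ℕ) = (j : ℕ) ∨ (p.1 : ℕ) + 1 = (j : ℕ) ∨ ((j : ℕ) = 0 ∧ (p.1 : ℕ) = n)
    | _, _ => False)

/-- Disjoint union of an indexed family of graphs. -/
def sigmaG {ι : Type*} {Vf : ι → Type*} (G : ∀ a, SimpleGraph (Vf a)) :
    SimpleGraph (Σ a, Vf a) :=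
  SimpleGraph.fromRel (fun x y =>
    ∃ h : x.1 = y.1, (G y.1).Adj (cast (congrArg Vf h) x.2) y.2)

/-- `FB¹(r,s)`: `Sum.inl (i,j) = w_{i,j}`, `Sum.inr (Sum.inl i) = xᵢ`,
`Sum.inr (Sum.inr (j,0)) = uⱼ`, `Sum.inr (Sum.inr (j,1)) = vⱼ`. -/
def FB1 (r s : ℕ) : SimpleGraph ((Fin r × Fin s) ⊕ (Fin r ⊕ (Fin s × Fin 2))) :=
  SimpleGraph.fromRel (fun a b =>
    match a, b with
    | Sum.inl w, Sum.inr (Sum.inl x) => w.1 = x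
    | Sum.inl w, Sum.inr (Sum.inr uv) => w.2 = uv.1
    | Sum.inr (Sum.inl _), Sum.inr (Sum.inr _) => True
    | _, _ => False)

/-- `FB²(r,s)`: `Sum.inl (i,j,0) = u_{i,j}`, `Sum.inl (i,j,1) = v_{i,j}`,
`Sum.inr (Sum.inl i) = xᵢ`, `Sum.inr (Sum.inr j) = wⱼ`. -/
def FB2 (r s : ℕ) : SimpleGraph ((Fin r × Fin s × Fin 2) ⊕ (Fin r ⊕ Fin s)) :=
  SimpleGraph.fromRel (fun a b =>
    match a, b with
    | Sum.inl uv, Sum.inr (Sum.inl x) => uv.1 = x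
    | Sum.inl uv, Sum.inr (Sum.inr w) => uv.2.1 = w
    | Sum.inr (Sum.inl _), Sum.inr (Sum.inr _) => True
    | _, _ => False)
section General

variable {G : SimpleGraph V} {f : Sym2 V → ℕ}

lemma chiLA_le_ncard_range_fplus (hf : IsLocalAntimagic G f) :
    chiLA G ≤ (Set.range (fplus G f)).ncard :=
  Nat.sInf_le ⟨f, hf, rfl⟩

lemma three_le_ncard_range_fplus [Finite V] (hf : IsLocalAntimagic G f) {a b c : V}
    (hab : G.Adj a b) (hac : G.Adj a c) (hbc : G.Adj b c) :
    3 ≤ (Set.range (fplus G f)).ncard :=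
  calc 3 = ({fplus G f a, fplus G f b, fplus G f c} : Set ℕ).ncard :=
        (Set.ncard_eq_three.2 ⟨_, _, _, hf.2 hab, hf.2 hac, hf.2 hbc, rfl⟩).symm
    _ ≤ _ := Set.ncard_le_ncard (by rintro _ (rfl | rfl | rfl) <;> exact ⟨_, rfl⟩)

lemma three_le_chiLA [Finite V] (hf : IsLocalAntimagic G f) {a b c : V}
    (hab : G.Adj a b) (hac : G.Adj a c) (hbc : G.Adj b c) : 3 ≤ chiLA G := by
  refine le_csInf ⟨_, f, hf, rfl⟩ ?_
  rintro _ ⟨g, hg, rfl⟩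
  exact three_le_ncard_range_fplus hg hab hac hbc

lemma fplus_eq_sum_neighborFinset [Fintype V] [DecidableRel G.Adj] (v : V) :
    fplus G f v = ∑ w ∈ G.neighborFinset v, f s(v, w) := by
  have hinc : G.incidenceSet v = (fun w => s(v, w)) '' (G.neighborFinset v : Set V) := by
    ext e
    induction e using Sym2.ind with
    | _ a b =>
      simp only [SimpleGraph.mk'_mem_incidenceSet_iff, Set.mem_image, Finset.mem_coe,
        SimpleGraph.mem_neighborFinset, Sym2.eq_iff]
      constructor
      · rintro ⟨h, rfl | rfl⟩
        exacts [⟨b, h, .inl ⟨rfl, rfl⟩⟩, ⟨a, h.symm, .inr ⟨rfl, rfl⟩⟩]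
      · rintro ⟨w, h, ⟨rfl, rfl⟩ | ⟨rfl, rfl⟩⟩
        exacts [⟨h, .inl rfl⟩, ⟨h.symm, .inr rfl⟩]
  rw [fplus, hinc, finsum_mem_image fun _ _ _ _ h => Sym2.congr_right.1 h, finsum_mem_coe_finset]

end General

lemma _root_.Set.SurjOn.bijOn_of_ncard_le {α β : Type*} {s : Set α} {t : Set β} {g : α → β}
    (hsurj : Set.SurjOn g s t) (hs : s.Finite) (hmaps : Set.MapsTo g s t)
    (hcard : s.ncard ≤ t.ncard) : Set.BijOn g s t :=
  ⟨hmaps, fun _ ha _ hb hab => Set.inj_on_of_surj_on_of_ncard_le (fun a _ => g a)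
    (fun _ ha => hmaps ha) (fun _ hb => by simpa [eq_comm] using hsurj hb) hcard ha hb hab hs,
    hsurj⟩

section Join

variable {α β : Type*} {G : SimpleGraph α} {H : SimpleGraph β}

@[simp] lemma joinG_adj_inl_inl {a b : α} : (joinG G H).Adj (.inl a) (.inl b) ↔ G.Adj a b :=
  ⟨fun h => h.2.elim id (·.symm), fun h => ⟨by simpa using h.ne, .inl h⟩⟩

@[simp] lemma joinG_adj_inr_inr {a b : β} : (joinG G H).Adj (.inr a) (.inr b) ↔ H.Adj a b :=
  ⟨fun h => h.2.elim id (·.symm), fun h => ⟨by simpa using h.ne, .inl h⟩⟩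

@[simp] lemma joinG_adj_inl_inr (a : α) (b : β) : (joinG G H).Adj (.inl a) (.inr b) :=
  ⟨Sum.inl_ne_inr, .inl trivial⟩

@[simp] lemma joinG_adj_inr_inl (a : β) (b : α) : (joinG G H).Adj (.inr a) (.inl b) :=
  ⟨Sum.inr_ne_inl, .inr trivial⟩

end Join

@[simp] lemma nP3_adj {n : ℕ} {p q : Fin n × Fin 3} :
    (nP3 n).Adj p q ↔ p.1 = q.1 ∧ ((p.2 : ℕ) + 1 = q.2 ∨ (q.2 : ℕ) + 1 = p.2) := by
  obtain ⟨i, j⟩ := p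
  obtain ⟨i', j'⟩ := q
  simp only [nP3, SimpleGraph.fromRel_adj]
  fin_cases j <;> fin_cases j' <;> simp [eq_comm]

section FanBlade

open Classical

variable {n : ℕ}

lemma neighborFinset_FB_inl_zero (i : Fin n) :
    (FB n).neighborFinset (.inl (i, 0)) = {.inl (i, 1), .inr 0} := by
  ext (⟨i', j⟩ | x) <;> rw [SimpleGraph.mem_neighborFinset]
  · fin_cases j <;> simp [FB, eq_comm]
  · simp [FB, Subsingleton.elim x 0]

lemma neighborFinset_FB_inl_one (i : Fin n) :
    (FB n).neighborFinset (.inl (i, 1)) = {.inl (i, 0), .inl (i, 2), .inr 0} := by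
  ext (⟨i', j⟩ | x) <;> rw [SimpleGraph.mem_neighborFinset]
  · fin_cases j <;> simp [FB, eq_comm]
  · simp [FB, Subsingleton.elim x 0]

lemma neighborFinset_FB_inl_two (i : Fin n) :
    (FB n).neighborFinset (.inl (i, 2)) = {.inl (i, 1), .inr 0} := by
  ext (⟨i', j⟩ | x) <;> rw [SimpleGraph.mem_neighborFinset]
  · fin_cases j <;> simp [FB, eq_comm]
  · simp [FB, Subsingleton.elim x 0]

lemma neighborFinset_FB_inr (x : Fin 1) :
    (FB n).neighborFinset (.inr x) = Finset.univ.map .inl := by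
  ext (p | y) <;> rw [SimpleGraph.mem_neighborFinset] <;> simp [FB]

lemma card_edgeFinset_FB : (FB n).edgeFinset.card = 5 * n := by
  have hdeg : ∑ v, (FB n).degree v = 10 * n := by
    simp [Fintype.sum_sum_type, Fintype.sum_prod_type, Fin.sum_univ_three,
      ← SimpleGraph.card_neighborFinset_eq_degree, neighborFinset_FB_inl_zero,
      neighborFinset_FB_inl_one, neighborFinset_FB_inl_two, neighborFinset_FB_inr, ← mul_add,
      mul_comm]
  have := (FB n).sum_degrees_eq_twice_card_edges
  omega

lemma ncard_edgeSet_FB : (FB n).edgeSet.ncard = 5 * n := by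
  rw [← SimpleGraph.coe_edgeFinset, Set.ncard_coe_finset, card_edgeFinset_FB]

end FanBlade

section Labeling

variable (m : ℕ)

/-- On `{0, …, 2m}` this is the cyclic shift `i ↦ i + m (mod 2m+1)`; `i + shift m i` takes every
value in `[m, 3m]` once: those of the parity of `m` for `i ≤ m`, the others for `i > m`. -/
def shift (i : ℕ) : ℕ := if i ≤ m then i + m else i - m - 1

variable {m}

lemma shift_le {i : ℕ} (hi : i < 2*m+1) : shift m i ≤ 2*m := by
  unfold shift; split_ifs <;> omega

lemma add_shift_mem_Icc {i : ℕ} (hi : i < 2*m+1) : i + shift m i ∈ Set.Icc m (3*m) := by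
  unfold shift; split_ifs <;> constructor <;> omega

lemma exists_shift_eq {k : ℕ} (hk : k < 2*m+1) : ∃ i < 2*m+1, shift m i = k := by
  by_cases h : m ≤ k
  · exact ⟨k - m, by omega, by unfold shift; split_ifs <;> omega⟩
  · exact ⟨k + m + 1, by omega, by unfold shift; split_ifs <;> omega⟩

lemma exists_add_shift_eq {s : ℕ} (hs : s ∈ Set.Icc m (3*m)) : ∃ i < 2*m+1, i + shift m i = s := by
  obtain ⟨hs₁, hs₂⟩ := hs
  by_cases h : (s - m) % 2 = 0
  · exact ⟨(s - m) / 2, by omega, by unfold shift; split_ifs <;> omega⟩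
  · exact ⟨(s + m + 1) / 2, by omega, by unfold shift; split_ifs <;> omega⟩

variable (m)

/-- `arcLabel m a b` is the label of the edge `ab` if it is listed in the orientation `(a, b)`,
and `0` otherwise. -/
def arcLabel : (Fin (2*m+1) × Fin 3) ⊕ Fin 1 → (Fin (2*m+1) × Fin 3) ⊕ Fin 1 → ℕ
  | .inl (i, j), .inl (i', j') =>
      if i = i' ∧ j = 0 ∧ j' = 1 then i + 1
      else if i = i' ∧ j = 1 ∧ j' = 2 then 6*m + 4 + shift m i
      else 0
  | .inl (i, j), .inr _ =>
      if j = 0 then 10*m + 5 - i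
      else if j = 1 then 7*m + 3 - (i + shift m i)
      else 4*m + 2 - shift m i
  | .inr _, _ => 0

def edgeLabel : Sym2 ((Fin (2*m+1) × Fin 3) ⊕ Fin 1) → ℕ :=
  Sym2.lift ⟨fun a b => arcLabel m a b + arcLabel m b a, fun _ _ => add_comm _ _⟩

@[simp] lemma edgeLabel_mk (a b : (Fin (2*m+1) × Fin 3) ⊕ Fin 1) :
    edgeLabel m s(a, b) = arcLabel m a b + arcLabel m b a := rfl

lemma edgeLabel_mapsTo :
    Set.MapsTo (edgeLabel m) (FB (2*m+1)).edgeSet (Set.Icc 1 (10*m+5)) := by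
  have hub (i : Fin (2*m+1)) (j : Fin 3) (x : Fin 1) :
      arcLabel m (.inl (i, j)) (.inr x) ∈ Set.Icc 1 (10*m+5) := by
    have := shift_le i.isLt
    obtain ⟨_, _⟩ := add_shift_mem_Icc i.isLt
    fin_cases j <;> simp [arcLabel] <;> omega
  intro e he
  induction e using Sym2.ind with
  | _ a b =>
    rcases a with ⟨i, j⟩ | x <;> rcases b with ⟨i', j'⟩ | y <;>
      simp only [FB, SimpleGraph.mem_edgeSet, joinG_adj_inl_inl, joinG_adj_inl_inr,
        joinG_adj_inr_inl, joinG_adj_inr_inr, SimpleGraph.bot_adj, nP3_adj] at he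
    · obtain ⟨rfl, hj⟩ := he
      have := shift_le i.isLt
      fin_cases j <;> fin_cases j' <;> simp at hj <;> simp [arcLabel] <;> omega
    · simpa [arcLabel] using hub i j y
    · simpa [arcLabel] using hub i' j' x

lemma edgeLabel_surjOn :
    Set.SurjOn (edgeLabel m) (FB (2*m+1)).edgeSet (Set.Icc 1 (10*m+5)) := by
  rintro k ⟨hk₁, hk₂⟩
  by_cases h₁ : k ≤ 2*m+1
  · refine ⟨s(.inl (⟨k-1, by omega⟩, 0), .inl (⟨k-1, by omega⟩, 1)), by simp [FB], ?_⟩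
    simp [arcLabel]; omega
  by_cases h₂ : k ≤ 4*m+2
  · obtain ⟨i, hi, hshift⟩ := exists_shift_eq (m := m) (k := 4*m+2-k) (by omega)
    refine ⟨s(.inl (⟨i, hi⟩, 2), .inr 0), by simp [FB], ?_⟩
    simp [arcLabel]; omega
  by_cases h₃ : k ≤ 6*m+3
  · obtain ⟨i, hi, hshift⟩ := exists_add_shift_eq (m := m) (s := 7*m+3-k) ⟨by omega, by omega⟩
    refine ⟨s(.inl (⟨i, hi⟩, 1), .inr 0), by simp [FB], ?_⟩
    simp [arcLabel]; omega
  by_cases h₄ : k ≤ 8*m+4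
  · obtain ⟨i, hi, hshift⟩ := exists_shift_eq (m := m) (k := k-(6*m+4)) (by omega)
    refine ⟨s(.inl (⟨i, hi⟩, 1), .inl (⟨i, hi⟩, 2)), by simp [FB], ?_⟩
    simp [arcLabel]; omega
  · refine ⟨s(.inl (⟨10*m+5-k, by omega⟩, 0), .inr 0), by simp [FB], ?_⟩
    simp [arcLabel]; omega

lemma edgeLabel_bijOn :
    Set.BijOn (edgeLabel m) (FB (2*m+1)).edgeSet (Set.Icc 1 (FB (2*m+1)).edgeSet.ncard) := by
  have hcard : (FB (2*m+1)).edgeSet.ncard = 10*m+5 := by rw [ncard_edgeSet_FB]; ring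
  rw [hcard]
  refine (edgeLabel_surjOn m).bijOn_of_ncard_le (Set.toFinite _) (edgeLabel_mapsTo m) ?_
  rw [hcard, ← Finset.coe_Icc, Set.ncard_coe_finset, Nat.card_Icc, Nat.add_sub_cancel]

open Classical in
lemma fplus_edgeLabel_inl (i : Fin (2*m+1)) (j : Fin 3) :
    fplus (FB (2*m+1)) (edgeLabel m) (.inl (i, j)) = if j = 1 then 13*m+8 else 10*m+6 := by
  have := shift_le i.isLt
  obtain ⟨_, _⟩ := add_shift_mem_Icc i.isLt
  rw [fplus_eq_sum_neighborFinset]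
  match j with
  | 0 => rw [neighborFinset_FB_inl_zero, Finset.sum_pair (by simp)]; simp [arcLabel]; omega
  | 1 =>
    rw [neighborFinset_FB_inl_one, Finset.sum_insert (by simp), Finset.sum_pair (by simp)]
    simp [arcLabel]; omega
  | 2 => rw [neighborFinset_FB_inl_two, Finset.sum_pair (by simp)]; simp [arcLabel]; omega

open Classical in
lemma lt_fplus_edgeLabel_inr (x : Fin 1) :
    13*m+8 < fplus (FB (2*m+1)) (edgeLabel m) (.inr x) := by
  have hsub : {.inl (0, 0), .inl (0, 1), .inl (0, 2)} ⊆ (FB (2*m+1)).neighborFinset (.inr x) := by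
    simp [neighborFinset_FB_inr, Finset.insert_subset_iff]
  rw [fplus_eq_sum_neighborFinset]
  -- the hub edges of the first blade alone carry `19m + 10`
  refine lt_of_lt_of_le ?_ (Finset.sum_le_sum_of_subset hsub)
  rw [Finset.sum_insert (by simp), Finset.sum_pair (by simp)]
  simp [arcLabel, shift]
  omega

lemma isLocalAntimagic_edgeLabel : IsLocalAntimagic (FB (2*m+1)) (edgeLabel m) := by
  refine ⟨edgeLabel_bijOn m, ?_⟩
  rintro (⟨i, j⟩ | x) (⟨i', j'⟩ | y) hadj
  · simp only [FB, joinG_adj_inl_inl, nP3_adj] at hadj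
    rw [fplus_edgeLabel_inl, fplus_edgeLabel_inl]
    fin_cases j <;> fin_cases j' <;> simp at hadj ⊢ <;> omega
  · have := lt_fplus_edgeLabel_inr m y
    rw [fplus_edgeLabel_inl]; split_ifs <;> omega
  · have := lt_fplus_edgeLabel_inr m x
    rw [fplus_edgeLabel_inl]; split_ifs <;> omega
  · simp [FB] at hadj

lemma ncard_range_fplus_edgeLabel_le :
    (Set.range (fplus (FB (2*m+1)) (edgeLabel m))).ncard ≤ 3 := by
  have hsub : Set.range (fplus (FB (2*m+1)) (edgeLabel m)) ⊆
      {10*m+6, 13*m+8, fplus (FB (2*m+1)) (edgeLabel m) (.inr 0)} := by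
    rintro _ ⟨⟨i, j⟩ | x, rfl⟩
    · rw [fplus_edgeLabel_inl]; split_ifs <;> simp
    · simp [Subsingleton.elim x 0]
  refine (Set.ncard_le_ncard hsub).trans ?_
  rw [← Finset.coe_pair, ← Finset.coe_insert, Set.ncard_coe_finset]
  exact Finset.card_le_three

end Labeling

theorem chiLA_FB_general (n : ℕ) (hodd : Odd n) : chiLA (FB n) = 3 := by
  obtain ⟨m, rfl⟩ := hodd
  have hf := isLocalAntimagic_edgeLabel m
  have huw : (FB (2*m+1)).Adj (.inl (0, 0)) (.inl (0, 1)) := by simp [FB]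
  have hux : (FB (2*m+1)).Adj (.inl (0, 0)) (.inr 0) := by simp [FB]
  have hwx : (FB (2*m+1)).Adj (.inl (0, 1)) (.inr 0) := by simp [FB]
  exact le_antisymm ((chiLA_le_ncard_range_fplus hf).trans (ncard_range_fplus_edgeLabel_le m))
    (three_le_chiLA hf huw hux hwx)

/-- For every odd `n ≥ 1`, `χ_{la}(FB(n)) = 3`. -/
theorem chiLA_FB (n : ℕ) (hodd : Odd n) (hn : 1 ≤ n) : chiLA (FB n) = 3 :=
  chiLA_FB_general n hodd

end LocalAntimagic
end

section
/- Let r, s ≥ 3 be odd integers and write rs = 2k+1. If k ≢ 2 (mod 4), then the local antimagic chromatic number of FB^1(r, s) equals 3, i.e., χ_la(FB^1(r, s)) = 3. -/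
namespace LocalAntimagic

variable {V W : Type*}

/-!
The triangle `w i j, x i, u j` gives the lower bound. For the upper bound put `m = rs = 2k + 1`.
The edges `x i w i j, w i j u j, w i j v j, x i v j, x i u j` form five classes indexed by `(i, j)`,
and class `b` takes the label block `[bm + 1, (b + 1)m]`: its edge `(i, j)` gets
`bm + 1 + π_b(γ i j)`, where `γ` is a bijection `[r] × [s] → [0, m)` with all row sums
`∑_j γ i j = sk`, `π_0 = id`, `π_1 y = (y + k) mod m`, `π_2 y = (2k - 2y) mod m` (so that
`π_0 + π_1 + π_2 = 3k`), `π_3 = 2k - π_2` and `π_4 = 2k - π_1`. Then every `w i j` has sum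
`9k + 6`, every `u j` and `v j` has sum `r(12k + 7)`, each `i` contributing `12k + 7`, and every
`x i` has sum `s(15k + 10) + 2 ∑_j γ i j = s(17k + 10)`. These three sums are pairwise distinct.
-/

theorem chiLA_eq_of_exists_le_of_forall_le {G : SimpleGraph V} {c : ℕ}
    (hex : ∃ f, IsLocalAntimagic G f ∧ (Set.range (fplus G f)).ncard ≤ c)
    (hlow : ∀ f, IsLocalAntimagic G f → c ≤ (Set.range (fplus G f)).ncard) :
    chiLA G = c := by
  obtain ⟨f, hf, hle⟩ := hex
  have hc : (Set.range (fplus G f)).ncard = c := le_antisymm hle (hlow f hf)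
  exact IsLeast.csInf_eq ⟨⟨f, hf, hc⟩, by rintro _ ⟨g, hg, rfl⟩; exact hlow g hg⟩

theorem IsLocalAntimagic.le_ncard_range_of_isNClique [Finite V] {G : SimpleGraph V}
    {f : Sym2 V → ℕ} (hf : IsLocalAntimagic G f) {n : ℕ} {t : Finset V} (ht : G.IsNClique n t) :
    n ≤ (Set.range (fplus G f)).ncard := by
  have hinj : Set.InjOn (fplus G f) t := fun a ha b hb hab => by
    by_contra hne
    exact hf.2 (ht.isClique ha hb hne) hab
  calc n = (fplus G f '' t).ncard := by rw [hinj.ncard_image, Set.ncard_coe_finset, ht.card_eq]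
    _ ≤ _ := Set.ncard_le_ncard (Set.image_subset_range _ _)

section EdgeParametrization

variable {ι : Type*} [Fintype ι] {G : SimpleGraph V} {e : ι → Sym2 V}

theorem fplus_extend (he : Function.Injective e) (hrange : Set.range e = G.edgeSet) (L : ι → ℕ)
    (v : V) [DecidablePred fun p => v ∈ e p] :
    fplus G (Function.extend e L 0) v = ∑ p with v ∈ e p, L p := by
  have hinc : G.incidenceSet v = e '' ↑({p | v ∈ e p} : Finset ι) := by
    ext x
    constructor
    · rintro ⟨hx, hv⟩
      obtain ⟨p, rfl⟩ := hrange ▸ hx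
      exact ⟨p, by simpa using hv, rfl⟩
    · rintro ⟨p, hp, rfl⟩
      exact ⟨hrange ▸ ⟨p, rfl⟩, by simpa using hp⟩
  rw [fplus, hinc, finsum_mem_image he.injOn, finsum_mem_coe_finset]
  exact Finset.sum_congr rfl fun p _ => he.extend_apply L 0 p

theorem bijOn_extend (he : Function.Injective e) (hrange : Set.range e = G.edgeSet) {L : ι → ℕ}
    (hL : Function.Injective L) (hmaps : ∀ p, L p ∈ Set.Icc 1 (Fintype.card ι)) :
    Set.BijOn (Function.extend e L 0) G.edgeSet (Set.Icc 1 G.edgeSet.ncard) := by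
  rw [← hrange, Set.ncard_range_of_injective he, Nat.card_eq_fintype_card, ← Set.image_univ,
    ← Set.bijOn_comp_iff he.injOn, Function.extend_comp he]
  have himage : L '' Set.univ = Set.Icc 1 (Fintype.card ι) := by
    refine Set.eq_of_subset_of_ncard_le (Set.image_subset_iff.2 fun p _ => hmaps p) ?_
    rw [hL.injOn.ncard_image, Set.ncard_univ, Nat.card_eq_fintype_card, ← Finset.coe_Icc,
      Set.ncard_coe_finset, Nat.card_Icc, Nat.add_sub_cancel]
  exact ⟨fun p _ => hmaps p, hL.injOn, himage.symm.subset⟩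

end EdgeParametrization

theorem eq_and_eq_of_mul_add_eq {m b₁ b₂ x₁ x₂ : ℕ} (h₁ : x₁ < m) (h₂ : x₂ < m)
    (h : b₁ * m + x₁ = b₂ * m + x₂) : b₁ = b₂ ∧ x₁ = x₂ := by
  have hm : 0 < m := by omega
  have hb : b₁ = b₂ := by
    simpa [Nat.add_comm (_ * m), Nat.add_mul_div_right _ _ hm, Nat.div_eq_of_lt h₁,
      Nat.div_eq_of_lt h₂] using congrArg (· / m) h
  subst hb
  exact ⟨rfl, by omega⟩

/-- `(i + h) mod (2h + 1)` on `{0, …, 2h}`. -/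
def halfShift (h i : ℕ) : ℕ := if i ≤ h then i + h else i - h - 1

/-- `(2h - 2i) mod (2h + 1)` on `{0, …, 2h}`. -/
def negDouble (h i : ℕ) : ℕ := if i ≤ h then 2 * h - 2 * i else 4 * h + 1 - 2 * i

section Kotzig

variable {h i : ℕ}

theorem halfShift_lt (hi : i < 2 * h + 1) : halfShift h i < 2 * h + 1 := by
  unfold halfShift; split_ifs <;> omega

theorem negDouble_lt (hi : i < 2 * h + 1) : negDouble h i < 2 * h + 1 := by
  unfold negDouble; split_ifs <;> omega

theorem halfShift_injOn : Set.InjOn (halfShift h) (Set.Iio (2 * h + 1)) := by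
  intro a ha b hb hab
  simp only [Set.mem_Iio, halfShift] at *
  split_ifs at hab <;> omega

theorem negDouble_injOn : Set.InjOn (negDouble h) (Set.Iio (2 * h + 1)) := by
  intro a ha b hb hab
  simp only [Set.mem_Iio, negDouble] at *
  split_ifs at hab <;> omega

theorem add_halfShift_add_negDouble (hi : i < 2 * h + 1) :
    i + halfShift h i + negDouble h i = 3 * h := by
  unfold halfShift negDouble; split_ifs <;> omega

end Kotzig

/-- Permutations of `{0, …, 2ρ}`: columns `0, 1, 2` have constant sum `3ρ` and the later columns
pair `i` with `2ρ - i`, so any odd number `≥ 3` of consecutive columns from `0` has constant sum. -/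
def columnPerm (ρ : ℕ) : ℕ → ℕ → ℕ
  | 0 => id
  | 1 => halfShift ρ
  | 2 => negDouble ρ
  | j + 3 => if Even j then id else (2 * ρ - ·)

section Columns

variable {ρ i : ℕ}

theorem columnPerm_lt (j : ℕ) (hi : i < 2 * ρ + 1) : columnPerm ρ j i < 2 * ρ + 1 := by
  match j with
  | 0 => exact hi
  | 1 => exact halfShift_lt hi
  | 2 => exact negDouble_lt hi
  | j + 3 => simp only [columnPerm]; split_ifs <;> simp only [id] <;> omega

theorem columnPerm_injOn (j : ℕ) : Set.InjOn (columnPerm ρ j) (Set.Iio (2 * ρ + 1)) := by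
  match j with
  | 0 => exact Set.injOn_id _
  | 1 => exact halfShift_injOn
  | 2 => exact negDouble_injOn
  | j + 3 =>
    intro a ha b hb hab
    simp only [Set.mem_Iio, columnPerm] at *
    split_ifs at hab <;> simp only [id] at hab <;> omega

theorem sum_columnPerm (σ : ℕ) (hi : i < 2 * ρ + 1) :
    ∑ j ∈ Finset.range (2 * σ + 3), columnPerm ρ j i = (2 * σ + 3) * ρ := by
  induction σ with
  | zero =>
    have := add_halfShift_add_negDouble hi
    simp only [Finset.sum_range_succ, Finset.range_zero, Finset.sum_empty, columnPerm, id]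
    omega
  | succ σ ih =>
    have hpair : columnPerm ρ (2 * σ + 3) i + columnPerm ρ (2 * σ + 4) i = 2 * ρ := by
      simp only [columnPerm, even_two_mul, if_true, Nat.not_even_two_mul_add_one, if_false, id]
      omega
    rw [show 2 * (σ + 1) + 3 = 2 * σ + 3 + 1 + 1 by ring, Finset.sum_range_succ,
      Finset.sum_range_succ, ih]
    linarith

end Columns

def balancedArray (r i j : ℕ) : ℕ := j * r + columnPerm (r / 2) j i

section BalancedArray

variable {r s i j : ℕ}

theorem balancedArray_lt (hr : Odd r) (hi : i < r) (hj : j < s) :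
    balancedArray r i j < r * s := by
  obtain ⟨ρ, rfl⟩ := hr
  have hcol := columnPerm_lt j hi
  have hrow := Nat.mul_le_mul_right (2 * ρ + 1) hj
  rw [Nat.succ_mul] at hrow
  rw [balancedArray, show (2 * ρ + 1) / 2 = ρ by omega, Nat.mul_comm (2 * ρ + 1) s]
  omega

theorem balancedArray_inj (hr : Odd r) {i' j' : ℕ} (hi : i < r) (hi' : i' < r)
    (h : balancedArray r i j = balancedArray r i' j') : i = i' ∧ j = j' := by
  obtain ⟨ρ, rfl⟩ := hr
  rw [balancedArray, balancedArray, show (2 * ρ + 1) / 2 = ρ by omega] at h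
  obtain ⟨rfl, hcol⟩ := eq_and_eq_of_mul_add_eq (columnPerm_lt j hi) (columnPerm_lt j' hi') h
  exact ⟨columnPerm_injOn j hi hi' hcol, rfl⟩

theorem sum_balancedArray (hr : Odd r) (hs : Odd s) (hs3 : 3 ≤ s) {k : ℕ}
    (hk : r * s = 2 * k + 1) (hi : i < r) :
    ∑ j ∈ Finset.range s, balancedArray r i j = s * k := by
  obtain ⟨ρ, rfl⟩ := hr
  obtain ⟨σ, rfl⟩ : ∃ σ, s = 2 * σ + 3 := ⟨s / 2 - 1, by obtain ⟨t, rfl⟩ := hs; omega⟩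
  have hgauss : ∑ j ∈ Finset.range (2 * σ + 3), j = (2 * σ + 3) * (σ + 1) := by
    have := Finset.sum_range_id_mul_two (2 * σ + 3)
    rw [show 2 * σ + 3 - 1 = 2 * (σ + 1) by omega] at this
    linarith
  simp only [balancedArray, show (2 * ρ + 1) / 2 = ρ by omega, Finset.sum_add_distrib,
    ← Finset.sum_mul, sum_columnPerm σ hi, hgauss]
  obtain rfl : k = (2 * ρ + 1) * (σ + 1) + ρ := by linarith
  ring

end BalancedArray

/-- Doubling and substituting `2k + 1 = rs` turns an equality into `r(12rs + 2) = s(17rs + 3)`;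
then `s ∣ r`, and `r = qs` forces `q ∣ 3`. -/
theorem mul_ne_mul_of_mul_eq {r s k : ℕ} (hs : Odd s) (hk : r * s = 2 * k + 1) :
    r * (12 * k + 7) ≠ s * (17 * k + 10) := by
  intro h
  have key : r * (12 * (r * s)) + r * 2 = s * (17 * (r * s) + 3) := by rw [hk]; linarith
  obtain ⟨q, rfl⟩ : s ∣ r := by
    have hdvd : s ∣ r * (12 * (r * s)) + r * 2 := key ▸ dvd_mul_right s _
    rw [Nat.dvd_add_right ⟨r * 12 * r, by ring⟩] at hdvd
    exact hs.coprime_two_right.dvd_of_dvd_mul_right hdvd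
  have key' : q * (12 * (s * q * s)) + q * 2 = 17 * (s * q * s) + 3 := by
    apply Nat.eq_of_mul_eq_mul_left hs.pos
    linarith
  have hq : q ∣ 3 := by
    rw [← Nat.dvd_add_right (Dvd.intro (17 * s * s) (by ring) : q ∣ 17 * (s * q * s)), ← key']
    exact ⟨12 * (s * q * s) + 2, by ring⟩
  have : q ≤ 3 := Nat.le_of_dvd (by norm_num) hq
  interval_cases q <;> omega

namespace FB1

abbrev Vertex (r s : ℕ) := (Fin r × Fin s) ⊕ (Fin r ⊕ (Fin s × Fin 2))

variable {r s k : ℕ}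

abbrev w (i : Fin r) (j : Fin s) : Vertex r s := Sum.inl (i, j)
abbrev x (i : Fin r) : Vertex r s := Sum.inr (Sum.inl i)
abbrev u (j : Fin s) : Vertex r s := Sum.inr (Sum.inr (j, 0))
abbrev v (j : Fin s) : Vertex r s := Sum.inr (Sum.inr (j, 1))

def edge (p : Fin 5 × Fin r × Fin s) : Sym2 (Vertex r s) :=
  let i := p.2.1; let j := p.2.2
  ![s(w i j, x i), s(w i j, u j), s(w i j, v j), s(x i, v j), s(x i, u j)] p.1

theorem edge_injective : Function.Injective (edge (r := r) (s := s)) := by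
  rintro ⟨b, i, j⟩ ⟨b', i', j'⟩ h
  fin_cases b <;> fin_cases b' <;> simp_all [edge]

theorem range_edge : Set.range (edge (r := r) (s := s)) = (FB1 r s).edgeSet := by
  ext e
  induction e with
  | _ a b =>
    rw [SimpleGraph.mem_edgeSet]
    constructor
    · rintro ⟨⟨b, i, j⟩, h⟩
      fin_cases b <;> simp [edge] at h <;> rcases h with ⟨rfl, rfl⟩ | ⟨rfl, rfl⟩ <;> simp [FB1]
    · intro hab
      rcases a with ⟨i, j⟩ | (i | ⟨j, c⟩) <;> rcases b with ⟨i', j'⟩ | (i' | ⟨j', c'⟩) <;>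
        simp only [FB1, SimpleGraph.fromRel_adj] at hab
      all_goals
        try fin_cases c
        try fin_cases c'
      all_goals simp [edge, Fin.exists_fin_succ] at hab ⊢ <;> aesop

section IncidentSums

variable (L : Fin 5 × Fin r × Fin s → ℕ)

theorem sum_incident_w (i : Fin r) (j : Fin s) :
    ∑ p with w i j ∈ edge p, L p = L (0, i, j) + L (1, i, j) + L (2, i, j) := by
  rw [Finset.sum_filter, Fintype.sum_prod_type, Fin.sum_univ_five]
  simp [edge]

theorem sum_incident_x (i : Fin r) :
    ∑ p with x i ∈ edge p, L p = ∑ j, (L (0, i, j) + L (3, i, j) + L (4, i, j)) := by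
  rw [Finset.sum_filter, Fintype.sum_prod_type, Fin.sum_univ_five]
  simp [edge, Fintype.sum_prod_type_right, Finset.sum_add_distrib]

theorem sum_incident_u (j : Fin s) :
    ∑ p with u j ∈ edge p, L p = ∑ i, (L (1, i, j) + L (4, i, j)) := by
  rw [Finset.sum_filter, Fintype.sum_prod_type, Fin.sum_univ_five]
  simp [edge, Fintype.sum_prod_type, Finset.sum_add_distrib]

theorem sum_incident_v (j : Fin s) :
    ∑ p with v j ∈ edge p, L p = ∑ i, (L (2, i, j) + L (3, i, j)) := by
  rw [Finset.sum_filter, Fintype.sum_prod_type, Fin.sum_univ_five]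
  simp [edge, Fintype.sum_prod_type, Finset.sum_add_distrib]

end IncidentSums

def blockPerm (k : ℕ) : Fin 5 → ℕ → ℕ :=
  ![id, halfShift k, negDouble k, fun y => 2 * k - negDouble k y, fun y => 2 * k - halfShift k y]

theorem blockPerm_lt (b : Fin 5) {y : ℕ} (hy : y < 2 * k + 1) : blockPerm k b y < 2 * k + 1 := by
  have := halfShift_lt hy
  have := negDouble_lt hy
  fin_cases b <;> simp [blockPerm] <;> omega

theorem blockPerm_injOn (b : Fin 5) : Set.InjOn (blockPerm k b) (Set.Iio (2 * k + 1)) := by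
  intro y hy y' hy' h
  have := halfShift_lt hy; have := halfShift_lt hy'
  have := negDouble_lt hy; have := negDouble_lt hy'
  fin_cases b <;> simp [blockPerm] at h
  · exact h
  · exact halfShift_injOn hy hy' h
  · exact negDouble_injOn hy hy' h
  · exact negDouble_injOn hy hy' (by omega)
  · exact halfShift_injOn hy hy' (by omega)

def label (k : ℕ) (p : Fin 5 × Fin r × Fin s) : ℕ :=
  p.1 * (2 * k + 1) + blockPerm k p.1 (balancedArray r p.2.1 p.2.2) + 1

theorem label_injective (hr : Odd r) (hk : r * s = 2 * k + 1) :
    Function.Injective (label (r := r) (s := s) k) := by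
  rintro ⟨b, i, j⟩ ⟨b', i', j'⟩ h
  have hγ : balancedArray r i j < 2 * k + 1 := hk ▸ balancedArray_lt hr i.isLt j.isLt
  have hγ' : balancedArray r i' j' < 2 * k + 1 := hk ▸ balancedArray_lt hr i'.isLt j'.isLt
  simp only [label, Nat.add_right_cancel_iff] at h
  obtain ⟨hb, hval⟩ := eq_and_eq_of_mul_add_eq (blockPerm_lt b hγ) (blockPerm_lt b' hγ') h
  obtain rfl := Fin.ext hb
  obtain ⟨hi, hj⟩ := balancedArray_inj hr i.isLt i'.isLt (blockPerm_injOn b hγ hγ' hval)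
  obtain rfl := Fin.ext hi
  obtain rfl := Fin.ext hj
  rfl

theorem label_mem_Icc (hr : Odd r) (hk : r * s = 2 * k + 1) (p : Fin 5 × Fin r × Fin s) :
    label k p ∈ Set.Icc 1 (Fintype.card (Fin 5 × Fin r × Fin s)) := by
  obtain ⟨b, i, j⟩ := p
  have hπ := blockPerm_lt b (hk ▸ balancedArray_lt hr i.isLt j.isLt)
  have hb := Nat.mul_le_mul_right (2 * k + 1) (Nat.lt_succ_iff.mp b.isLt)
  simp only [Fintype.card_prod, Fintype.card_fin, hk, label, Set.mem_Icc]
  omega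

noncomputable def labeling (r s k : ℕ) : Sym2 (Vertex r s) → ℕ :=
  Function.extend edge (label k) 0

section VertexSums

variable (hr : Odd r) (hk : r * s = 2 * k + 1)
include hr hk

theorem fplus_labeling_w (i : Fin r) (j : Fin s) :
    fplus (FB1 r s) (labeling r s k) (w i j) = 9 * k + 6 := by
  rw [labeling, fplus_extend edge_injective range_edge, sum_incident_w]
  have hγ := hk ▸ balancedArray_lt hr i.isLt j.isLt
  have := add_halfShift_add_negDouble hγ
  simp [label, blockPerm]
  omega

theorem fplus_labeling_u (j : Fin s) :
    fplus (FB1 r s) (labeling r s k) (u j) = r * (12 * k + 7) := by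
  rw [labeling, fplus_extend edge_injective range_edge, sum_incident_u]
  have hpair (i : Fin r) : label k (1, i, j) + label k (4, i, j) = 12 * k + 7 := by
    have hγ := hk ▸ balancedArray_lt hr i.isLt j.isLt
    have := halfShift_lt hγ
    simp [label, blockPerm]
    omega
  simp [hpair]

theorem fplus_labeling_v (j : Fin s) :
    fplus (FB1 r s) (labeling r s k) (v j) = r * (12 * k + 7) := by
  rw [labeling, fplus_extend edge_injective range_edge, sum_incident_v]
  have hpair (i : Fin r) : label k (2, i, j) + label k (3, i, j) = 12 * k + 7 := by
    have hγ := hk ▸ balancedArray_lt hr i.isLt j.isLt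
    have := negDouble_lt hγ
    simp [label, blockPerm]
    omega
  simp [hpair]

theorem fplus_labeling_x (hs : Odd s) (hs3 : 3 ≤ s) (i : Fin r) :
    fplus (FB1 r s) (labeling r s k) (x i) = s * (17 * k + 10) := by
  rw [labeling, fplus_extend edge_injective range_edge, sum_incident_x]
  have htriple (j : Fin s) : label k (0, i, j) + label k (3, i, j) + label k (4, i, j) =
      15 * k + 10 + 2 * balancedArray r i j := by
    have hγ := hk ▸ balancedArray_lt hr i.isLt j.isLt
    have := add_halfShift_add_negDouble hγ
    have := halfShift_lt hγ
    have := negDouble_lt hγ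
    simp [label, blockPerm]
    omega
  have hrow : ∑ j : Fin s, balancedArray r i j = s * k := by
    rw [Fin.sum_univ_eq_sum_range (balancedArray r i), sum_balancedArray hr hs hs3 hk i.isLt]
  simp only [htriple, Finset.sum_add_distrib, ← Finset.mul_sum, hrow, Finset.sum_const,
    Finset.card_univ, Fintype.card_fin, smul_eq_mul]
  ring

end VertexSums

section Labeling

variable (hr : Odd r) (hs : Odd s) (hs3 : 3 ≤ s) (hk : r * s = 2 * k + 1)
include hr hs hs3 hk

theorem fplus_labeling :
    fplus (FB1 r s) (labeling r s k) =
      Sum.elim (fun _ => 9 * k + 6)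
        (Sum.elim (fun _ => s * (17 * k + 10)) fun _ => r * (12 * k + 7)) := by
  funext a
  rcases a with ⟨i, j⟩ | (i | ⟨j, c⟩)
  · exact fplus_labeling_w hr hk i j
  · exact fplus_labeling_x hr hk hs hs3 i
  · fin_cases c
    · exact fplus_labeling_u hr hk j
    · exact fplus_labeling_v hr hk j

theorem isLocalAntimagic_labeling : IsLocalAntimagic (FB1 r s) (labeling r s k) := by
  refine ⟨bijOn_extend edge_injective range_edge (label_injective hr hk) (label_mem_Icc hr hk), ?_⟩
  have hwu : 9 * k + 6 ≠ r * (12 * k + 7) := by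
    have := Nat.mul_le_mul_right (12 * k + 7) hr.pos; omega
  have hwx : 9 * k + 6 ≠ s * (17 * k + 10) := by
    have := Nat.mul_le_mul_right (17 * k + 10) hs.pos; omega
  have hxu := (mul_ne_mul_of_mul_eq hs hk).symm
  intro a b hab
  rw [fplus_labeling hr hs hs3 hk]
  rcases a with ⟨i, j⟩ | (i | ⟨j, c⟩) <;> rcases b with ⟨i', j'⟩ | (i' | ⟨j', c'⟩) <;>
    simp [FB1] at hab <;> simp [hwu, hwx, hxu, hwu.symm, hwx.symm, hxu.symm]

theorem ncard_range_fplus_labeling_le :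
    (Set.range (fplus (FB1 r s) (labeling r s k))).ncard ≤ 3 := by
  calc _ ≤ ({9 * k + 6, s * (17 * k + 10), r * (12 * k + 7)} : Finset ℕ).card := by
        rw [← Set.ncard_coe_finset]
        refine Set.ncard_le_ncard ?_ (Finset.finite_toSet _)
        rintro _ ⟨a, rfl⟩
        rcases a with _ | (_ | _) <;> simp [fplus_labeling hr hs hs3 hk]
    _ ≤ 3 := Finset.card_le_three

end Labeling

theorem is3Clique_w_x_u (i : Fin r) (j : Fin s) : (FB1 r s).IsNClique 3 {w i j, x i, u j} := by
  rw [SimpleGraph.is3Clique_triple_iff]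
  simp [FB1]

end FB1

theorem chiLA_FB1_general (r s k : ℕ) (hrodd : Odd r) (hsodd : Odd s)
    (hs : 3 ≤ s) (hk : r * s = 2 * k + 1) :
    chiLA (FB1 r s) = 3 := by
  refine chiLA_eq_of_exists_le_of_forall_le
    ⟨FB1.labeling r s k, FB1.isLocalAntimagic_labeling hrodd hsodd hs hk,
      FB1.ncard_range_fplus_labeling_le hrodd hsodd hs hk⟩ fun f hf => ?_
  exact hf.le_ncard_range_of_isNClique (FB1.is3Clique_w_x_u ⟨0, hrodd.pos⟩ ⟨0, by omega⟩)

/-- For odd `r, s ≥ 3` with `rs = 2k+1` and `k ≢ 2 (mod 4)`, `χ_{la}(FB¹(r,s)) = 3`. -/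
theorem chiLA_FB1 (r s k : ℕ) (hrodd : Odd r) (hsodd : Odd s)
    (hr : 3 ≤ r) (hs : 3 ≤ s) (hk : r * s = 2 * k + 1) (hkmod : k % 4 ≠ 2) :
    chiLA (FB1 r s) = 3 :=
  chiLA_FB1_general r s k hrodd hsodd hs hk

end LocalAntimagic
end

section
/- For all odd integers r, s ≥ 3, the local antimagic chromatic number of FB^2(r, s) equals 3, i.e., χ_la(FB^2(r, s)) = 3. -/
namespace LocalAntimagic

variable {V W : Type*}

set_option linter.unusedVariables false
set_option maxHeartbeats 1000000

def xf (m i : ℕ) : ℕ := if i ≤ m then 2*i else 2*(i-m)-1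
def xg (m i : ℕ) : ℕ := if i ≤ m then i+m else i-m-1
def xh (m i : ℕ) : ℕ := if i ≤ m then m-i else 3*m+1-i
def tau (M i j : ℕ) : ℕ :=
  if i = 0 then j
  else if i = 1 then (if j ≤ M then 2*M-2*j else 4*M+1-2*j)
  else if i = 2 then (if j ≤ M then M+j else j-M-1)
  else if i % 2 = 1 then j else 2*M-j

def blk (k : ℕ) : ℕ := if k = 0 then 4 else if k = 1 then 0 else if k = 2 then 1 else if k = 3 then 3 else 2
def dig1 (m M k i j : ℕ) : ℕ := if k = 0 then 2*m - xf m i else if k = 1 then xf m i else if k = 2 then xg m i else if k = 3 then xh m i else i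
def dig2 (m M k i j : ℕ) : ℕ := if k = 0 then 2*M - j else if k = 1 then j else if k = 2 then j else if k = 3 then 2*M - j else tau M i j

/-- label of edge family k (0:ux, 1:uw, 2:vx, 3:vw, 4:xw) at cell (i,j) -/
def Lab (m M k i j : ℕ) : ℕ :=
  1 + (dig1 m M k i j + (2*m+1) * dig2 m M k i j) + ((2*m+1)*(2*M+1)) * blk k

lemma xf_lt {m i : ℕ} (hi : i < 2*m+1) : xf m i < 2*m+1 := by
  unfold xf; split_ifs <;> omega
lemma xg_lt {m i : ℕ} (hi : i < 2*m+1) : xg m i < 2*m+1 := by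
  unfold xg; split_ifs <;> omega
lemma xh_lt {m i : ℕ} (hi : i < 2*m+1) : xh m i < 2*m+1 := by
  unfold xh; split_ifs <;> omega
lemma tau_lt {M i j : ℕ} (hj : j < 2*M+1) : tau M i j < 2*M+1 := by
  unfold tau; split_ifs <;> omega
lemma xf_inj {m i i' : ℕ} (hi : i < 2*m+1) (hi' : i' < 2*m+1)
    (h : xf m i = xf m i') : i = i' := by
  unfold xf at h; split_ifs at h <;> omega
lemma xg_inj {m i i' : ℕ} (hi : i < 2*m+1) (hi' : i' < 2*m+1)
    (h : xg m i = xg m i') : i = i' := by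
  unfold xg at h; split_ifs at h <;> omega
lemma xh_inj {m i i' : ℕ} (hi : i < 2*m+1) (hi' : i' < 2*m+1)
    (h : xh m i = xh m i') : i = i' := by
  unfold xh at h; split_ifs at h <;> omega
lemma tau_inj {M i j j' : ℕ} (hj : j < 2*M+1) (hj' : j' < 2*M+1)
    (h : tau M i j = tau M i j') : j = j' := by
  unfold tau at h; split_ifs at h <;> omega

lemma dig1_lt {m M k i j : ℕ} (hi : i < 2*m+1) : dig1 m M k i j < 2*m+1 := by
  unfold dig1; split_ifs
  · have := xf_lt (m := m) hi; omega
  · exact xf_lt hi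
  · exact xg_lt hi
  · exact xh_lt hi
  · exact hi

lemma dig2_lt {m M k i j : ℕ} (hj : j < 2*M+1) : dig2 m M k i j < 2*M+1 := by
  unfold dig2; split_ifs
  · omega
  · exact hj
  · exact hj
  · omega
  · exact tau_lt hj

lemma blk_le (k : ℕ) : blk k ≤ 4 := by unfold blk; split_ifs <;> omega

lemma blk_inj {k k' : ℕ} (hk : k < 5) (hk' : k' < 5) (h : blk k = blk k') : k = k' := by
  unfold blk at h; split_ifs at h <;> omega

/-- digit decomposition uniqueness -/
lemma digit_eq {r a b j j' : ℕ} (ha : a < r) (hb : b < r)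
    (h : a + r*j = b + r*j') : a = b ∧ j = j' := by
  have h1 : a % r = b % r := by
    have := congrArg (· % r) h
    simpa [Nat.add_mul_mod_self_left] using this
  rw [Nat.mod_eq_of_lt ha, Nat.mod_eq_of_lt hb] at h1
  subst h1
  refine ⟨rfl, ?_⟩
  have : r*j = r*j' := by omega
  exact Nat.eq_of_mul_eq_mul_left (by omega) this

lemma lab_mem (m M k i j : ℕ) (hi : i < 2*m+1) (hj : j < 2*M+1) :
    Lab m M k i j ∈ Set.Icc 1 (5*((2*m+1)*(2*M+1))) := by
  unfold Lab
  constructor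
  · omega
  · have h1 : (2*m+1)*(dig2 m M k i j) + (2*m+1) ≤ (2*m+1)*(2*M+1) := by
      calc (2*m+1)*(dig2 m M k i j) + (2*m+1) = (2*m+1)*(dig2 m M k i j + 1) := by ring
        _ ≤ (2*m+1)*(2*M+1) := Nat.mul_le_mul_left _ (dig2_lt hj)
    have h2 : ((2*m+1)*(2*M+1)) * blk k ≤ ((2*m+1)*(2*M+1)) * 4 := Nat.mul_le_mul_left _ (blk_le k)
    have h3 := dig1_lt (M := M) (k := k) (j := j) hi
    omega

lemma lab_inj (m M : ℕ) {k i j k' i' j' : ℕ} (hk : k < 5) (hi : i < 2*m+1) (hj : j < 2*M+1)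
    (hk' : k' < 5) (hi' : i' < 2*m+1) (hj' : j' < 2*M+1)
    (h : Lab m M k i j = Lab m M k' i' j') : k = k' ∧ i = i' ∧ j = j' := by
  unfold Lab at h
  have hD : dig1 m M k i j + (2*m+1)*(dig2 m M k i j) < (2*m+1)*(2*M+1) := by
    have h1 : (2*m+1)*(dig2 m M k i j) + (2*m+1) ≤ (2*m+1)*(2*M+1) := by
      calc (2*m+1)*(dig2 m M k i j) + (2*m+1) = (2*m+1)*(dig2 m M k i j + 1) := by ring
        _ ≤ (2*m+1)*(2*M+1) := Nat.mul_le_mul_left _ (dig2_lt hj)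
    have := dig1_lt (M := M) (k := k) (j := j) hi
    omega
  have hD' : dig1 m M k' i' j' + (2*m+1)*(dig2 m M k' i' j') < (2*m+1)*(2*M+1) := by
    have h1 : (2*m+1)*(dig2 m M k' i' j') + (2*m+1) ≤ (2*m+1)*(2*M+1) := by
      calc (2*m+1)*(dig2 m M k' i' j') + (2*m+1) = (2*m+1)*(dig2 m M k' i' j' + 1) := by ring
        _ ≤ (2*m+1)*(2*M+1) := Nat.mul_le_mul_left _ (dig2_lt hj')
    have := dig1_lt (M := M) (k := k') (j := j') hi'
    omega
  obtain ⟨hDD, hBB⟩ := digit_eq (j := blk k) (j' := blk k') hD hD' (by omega)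
  have hkk : k = k' := blk_inj hk hk' hBB
  subst hkk
  obtain ⟨h1, h2⟩ := digit_eq (j := dig2 m M k i j) (j' := dig2 m M k i' j') (dig1_lt (M := M) (k := k) (j := j) hi)
    (dig1_lt (M := M) (k := k) (j := j') hi') hDD
  unfold dig1 at h1
  unfold dig2 at h2
  split_ifs at h1 h2 with e0 e1 e2 e3
  · have hx := xf_lt (m := m) hi; have hx' := xf_lt (m := m) hi'
    exact ⟨rfl, xf_inj hi hi' (by omega), by omega⟩
  · exact ⟨rfl, xf_inj hi hi' h1, h2⟩
  · exact ⟨rfl, xg_inj hi hi' h1, h2⟩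
  · exact ⟨rfl, xh_inj hi hi' h1, by omega⟩
  · subst h1; exact ⟨rfl, rfl, tau_inj hj hj' h2⟩





open Finset

lemma tau0 (M j : ℕ) : tau M 0 j = j := by simp [tau]
lemma tau1 (M j : ℕ) : tau M 1 j = if j ≤ M then 2*M-2*j else 4*M+1-2*j := by simp [tau]
lemma tau2 (M j : ℕ) : tau M 2 j = if j ≤ M then M+j else j-M-1 := by simp [tau]
lemma tau_ge3 {i : ℕ} (M j : ℕ) (h : 3 ≤ i) : tau M i j = if i % 2 = 1 then j else 2*M-j := by
  unfold tau; rw [if_neg (by omega), if_neg (by omega), if_neg (by omega)]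

lemma gauss2 (n : ℕ) : 2 * (∑ i ∈ range n, i) + n = n*n := by
  have h := Finset.sum_range_id_mul_two n
  have h2 : n*(n-1) + n = n*n := by
    cases n with
    | zero => simp
    | succ k => simp only [Nat.add_sub_cancel]; ring
  linarith

lemma split_range (a b : ℕ) (f : ℕ → ℕ) (h : a ≤ b) :
    ∑ i ∈ range b, f i = ∑ i ∈ range a, f i + ∑ t ∈ range (b - a), f (a + t) := by
  have h1 : ∑ i ∈ range b, f i = ∑ i ∈ Ico 0 a, f i + ∑ i ∈ Ico a b, f i := by
    rw [Finset.sum_Ico_consecutive f (Nat.zero_le a) h, Finset.range_eq_Ico]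
  rw [h1, ← Finset.range_eq_Ico, Finset.sum_Ico_eq_sum_range]

lemma sum_refl (n : ℕ) : ∑ j ∈ range n, (n - 1 - j) = ∑ j ∈ range n, j :=
  Finset.sum_range_reflect (fun j => j) n

lemma sum_id' (n : ℕ) : ∑ i ∈ range (2*n+1), i = (2*n+1)*n := by
  have h := gauss2 (2*n+1)
  have h2 : (2*n+1)*(2*n+1) = 2*((2*n+1)*n) + (2*n+1) := by ring
  linarith

lemma sum_reflect' (M : ℕ) : ∑ j ∈ range (2*M+1), (2*M - j) = (2*M+1)*M := by
  have h : ∀ j ∈ range (2*M+1), 2*M - j = (2*M+1) - 1 - j := by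
    intro j hj; omega
  rw [Finset.sum_congr rfl h, sum_refl, sum_id']

lemma sum_xf (m : ℕ) : ∑ i ∈ range (2*m+1), xf m i = (2*m+1)*m := by
  rw [split_range (m+1) (2*m+1) _ (by omega)]
  have h1 : ∑ i ∈ range (m+1), xf m i = 2 * ∑ i ∈ range (m+1), i := by
    rw [Finset.mul_sum]
    refine Finset.sum_congr rfl fun i hi => ?_
    rw [Finset.mem_range] at hi; unfold xf; rw [if_pos (by omega)]
  have h2 : ∑ t ∈ range (2*m+1-(m+1)), xf m (m+1+t) = 2 * (∑ t ∈ range m, t) + m := by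
    have e : 2*m+1-(m+1) = m := by omega
    rw [e]
    have e2 : ∀ t ∈ range m, xf m (m+1+t) = 2*t+1 := by
      intro t ht; rw [Finset.mem_range] at ht; unfold xf; rw [if_neg (by omega)]; omega
    rw [Finset.sum_congr rfl e2, Finset.sum_add_distrib, Finset.mul_sum]
    simp [Finset.mul_sum]
  rw [h1, h2]
  have g1 := gauss2 (m+1)
  have g2 := gauss2 m
  have r1 : (m+1)*(m+1) = m*m + 2*m + 1 := by ring
  have r2 : (2*m+1)*m = 2*(m*m) + m := by ring
  linarith

lemma sum_xh (m : ℕ) : ∑ i ∈ range (2*m+1), xh m i = (2*m+1)*m := by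
  rw [split_range (m+1) (2*m+1) _ (by omega)]
  have h1 : ∑ i ∈ range (m+1), xh m i = ∑ i ∈ range (m+1), i := by
    have e2 : ∀ i ∈ range (m+1), xh m i = (m+1) - 1 - i := by
      intro i hi; rw [Finset.mem_range] at hi; unfold xh; rw [if_pos (by omega)]; omega
    rw [Finset.sum_congr rfl e2, sum_refl]
  have h2 : ∑ t ∈ range (2*m+1-(m+1)), xh m (m+1+t) = ∑ t ∈ range m, t + m*(m+1) := by
    have e : 2*m+1-(m+1) = m := by omega
    rw [e]
    have e2 : ∀ t ∈ range m, xh m (m+1+t) = (m - 1 - t) + (m+1) := by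
      intro t ht; rw [Finset.mem_range] at ht; unfold xh; rw [if_neg (by omega)]; omega
    rw [Finset.sum_congr rfl e2, Finset.sum_add_distrib]
    have e3 : ∑ t ∈ range m, (m-1-t) = ∑ t ∈ range m, t := sum_refl m
    rw [e3]
    simp [mul_comm]
  rw [h1, h2]
  have g1 := gauss2 (m+1)
  have g2 := gauss2 m
  have r1 : (m+1)*(m+1) = m*m + 2*m + 1 := by ring
  have r2 : (2*m+1)*m = 2*(m*m) + m := by ring
  have r3 : m*(m+1) = m*m + m := by ring
  linarith

lemma sum_alt (n a b : ℕ) : ∑ t ∈ range (2*n), (if t % 2 = 0 then a else b) = n*(a+b) := by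
  induction n with
  | zero => simp
  | succ n ih =>
    have e : 2*(n+1) = (2*n+1)+1 := by ring
    rw [e, Finset.sum_range_succ, Finset.sum_range_succ, ih]
    rw [if_pos (by omega : (2*n) % 2 = 0), if_neg (by omega : ¬ (2*n+1) % 2 = 0)]
    ring

lemma tau_col {m M j : ℕ} (hm : 1 ≤ m) (hj : j < 2*M+1) :
    ∑ i ∈ range (2*m+1), tau M i j = (2*m+1)*M := by
  obtain ⟨k, rfl⟩ : ∃ k, m = k+1 := ⟨m-1, by omega⟩
  rw [split_range 3 (2*(k+1)+1) _ (by omega)]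
  have h1 : ∑ i ∈ range 3, tau M i j = 3*M := by
    rw [Finset.sum_range_succ, Finset.sum_range_succ, Finset.sum_range_one,
      tau0, tau1, tau2]
    split_ifs <;> omega
  have h2 : ∑ t ∈ range (2*(k+1)+1-3), tau M (3+t) j
      = ∑ t ∈ range (2*k), (if t % 2 = 0 then j else 2*M-j) := by
    have e : 2*(k+1)+1-3 = 2*k := by omega
    rw [e]
    refine Finset.sum_congr rfl fun t ht => ?_
    rw [tau_ge3 M j (by omega)]
    split_ifs <;> omega
  rw [h1, h2, sum_alt]
  have e2 : j + (2*M-j) = 2*M := by omega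
  rw [e2]
  have r1 : (2*(k+1)+1)*M = 3*M + 2*(k*M) := by ring
  have r2 : k*(2*M) = 2*(k*M) := by ring
  linarith

lemma tau_row {m M i : ℕ} (hi : i < 2*m+1) :
    ∑ j ∈ range (2*M+1), tau M i j = (2*M+1)*M := by
  rcases Nat.lt_or_ge i 3 with h3 | h3
  · interval_cases i
    · simp only [tau0]; exact sum_id' M
    · simp only [tau1]
      rw [split_range (M+1) (2*M+1) _ (by omega)]
      have h1 : ∑ j ∈ range (M+1), (if j ≤ M then 2*M-2*j else 4*M+1-2*j)
          = 2 * ∑ j ∈ range (M+1), j := by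
        have e2 : ∀ j ∈ range (M+1), (if j ≤ M then 2*M-2*j else 4*M+1-2*j) = 2*((M+1)-1-j) := by
          intro j hj; rw [Finset.mem_range] at hj; rw [if_pos (by omega)]; omega
        rw [Finset.sum_congr rfl e2, ← Finset.mul_sum, sum_refl]
      have h2 : ∑ t ∈ range (2*M+1-(M+1)), (if (M+1+t) ≤ M then 2*M-2*(M+1+t) else 4*M+1-2*(M+1+t))
          = 2 * (∑ t ∈ range M, t) + M := by
        have e : 2*M+1-(M+1) = M := by omega
        rw [e]
        have e2 : ∀ t ∈ range M, (if (M+1+t) ≤ M then 2*M-2*(M+1+t) else 4*M+1-2*(M+1+t))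
            = 2*(M-1-t)+1 := by
          intro t ht; rw [Finset.mem_range] at ht; rw [if_neg (by omega)]; omega
        rw [Finset.sum_congr rfl e2, Finset.sum_add_distrib, ← Finset.mul_sum, sum_refl]
        simp
      rw [h1, h2]
      have g1 := gauss2 (M+1)
      have g2 := gauss2 M
      have r1 : (M+1)*(M+1) = M*M + 2*M + 1 := by ring
      have r2 : (2*M+1)*M = 2*(M*M) + M := by ring
      linarith
    · simp only [tau2]
      rw [split_range (M+1) (2*M+1) _ (by omega)]
      have h1 : ∑ j ∈ range (M+1), (if j ≤ M then M+j else j-M-1)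
          = (M+1)*M + ∑ j ∈ range (M+1), j := by
        have e2 : ∀ j ∈ range (M+1), (if j ≤ M then M+j else j-M-1) = M + j := by
          intro j hj; rw [Finset.mem_range] at hj; rw [if_pos (by omega)]
        rw [Finset.sum_congr rfl e2, Finset.sum_add_distrib]
        simp [mul_comm]
      have h2 : ∑ t ∈ range (2*M+1-(M+1)), (if (M+1+t) ≤ M then M+(M+1+t) else (M+1+t)-M-1)
          = ∑ t ∈ range M, t := by
        have e : 2*M+1-(M+1) = M := by omega
        rw [e]
        refine Finset.sum_congr rfl fun t ht => ?_
        rw [if_neg (by omega)]; omega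
      rw [h1, h2]
      have g1 := gauss2 (M+1)
      have g2 := gauss2 M
      have r1 : (M+1)*(M+1) = M*M + 2*M + 1 := by ring
      have r2 : (2*M+1)*M = 2*(M*M) + M := by ring
      have r3 : (M+1)*M = M*M + M := by ring
      linarith
  · rcases Nat.even_or_odd i with he | ho
    · have hp : i % 2 = 0 := Nat.even_iff.mp he
      have e2 : ∀ j ∈ range (2*M+1), tau M i j = 2*M - j := by
        intro j hj; rw [tau_ge3 M j h3, if_neg (by omega)]
      rw [Finset.sum_congr rfl e2, sum_reflect']
    · have hp : i % 2 = 1 := Nat.odd_iff.mp ho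
      have e2 : ∀ j ∈ range (2*M+1), tau M i j = j := by
        intro j hj; rw [tau_ge3 M j h3, if_pos hp]
      rw [Finset.sum_congr rfl e2, sum_id']


set_option maxHeartbeats 1000000



section Construction
variable (m M : ℕ)

abbrev VT := (Fin (2*m+1) × Fin (2*M+1) × Fin 2) ⊕ (Fin (2*m+1) ⊕ Fin (2*M+1))

def uu (i : Fin (2*m+1)) (j : Fin (2*M+1)) : VT m M := Sum.inl (i, j, 0)
def vv (i : Fin (2*m+1)) (j : Fin (2*M+1)) : VT m M := Sum.inl (i, j, 1)
def xx (i : Fin (2*m+1)) : VT m M := Sum.inr (Sum.inl i)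
def ww (j : Fin (2*M+1)) : VT m M := Sum.inr (Sum.inr j)

def Ed (k : ℕ) (i : Fin (2*m+1)) (j : Fin (2*M+1))  : Sym2 (VT m M) :=
  if k = 0 then s(uu m M i j, xx m M i)
  else if k = 1 then s(uu m M i j, ww m M j)
  else if k = 2 then s(vv m M i j, xx m M i)
  else if k = 3 then s(vv m M i j, ww m M j)
  else s(xx m M i, ww m M j)

def Fd : VT m M → VT m M → ℕ
  | Sum.inl q, Sum.inr (Sum.inl x) =>
      if q.1 = x then (if q.2.2 = 0 then Lab m M 0 q.1 q.2.1 else Lab m M 2 q.1 q.2.1) else 0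
  | Sum.inl q, Sum.inr (Sum.inr w) =>
      if q.2.1 = w then (if q.2.2 = 0 then Lab m M 1 q.1 q.2.1 else Lab m M 3 q.1 q.2.1) else 0
  | Sum.inr (Sum.inl x), Sum.inr (Sum.inr w) => Lab m M 4 x w
  | _, _ => 0

def fC : Sym2 (VT m M) → ℕ :=
  Sym2.lift ⟨fun a b => Fd m M a b + Fd m M b a, fun a b => Nat.add_comm _ _⟩

lemma fC_mk (a b : VT m M) : fC m M s(a, b) = Fd m M a b + Fd m M b a := rfl

lemma fC_Ed0 (i : Fin (2*m+1)) (j : Fin (2*M+1)) :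
    fC m M (Ed m M 0 i j) = Lab m M 0 i j := by
  simp [Ed, fC_mk, Fd, uu, xx]
lemma fC_Ed1 (i : Fin (2*m+1)) (j : Fin (2*M+1)) :
    fC m M (Ed m M 1 i j) = Lab m M 1 i j := by
  simp [Ed, fC_mk, Fd, uu, ww]
lemma fC_Ed2 (i : Fin (2*m+1)) (j : Fin (2*M+1)) :
    fC m M (Ed m M 2 i j) = Lab m M 2 i j := by
  simp [Ed, fC_mk, Fd, vv, xx, Fin.ext_iff]
lemma fC_Ed3 (i : Fin (2*m+1)) (j : Fin (2*M+1)) :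
    fC m M (Ed m M 3 i j) = Lab m M 3 i j := by
  simp [Ed, fC_mk, Fd, vv, ww, Fin.ext_iff]
lemma fC_Ed4 (i : Fin (2*m+1)) (j : Fin (2*M+1)) :
    fC m M (Ed m M 4 i j) = Lab m M 4 i j := by
  simp [Ed, fC_mk, Fd, xx, ww]


lemma adj_ux (i : Fin (2*m+1)) (j : Fin (2*M+1)) :
    (FB2 (2*m+1) (2*M+1)).Adj (uu m M i j) (xx m M i) := by
  rw [FB2, SimpleGraph.fromRel_adj]
  exact ⟨by simp [uu, xx], Or.inl rfl⟩
lemma adj_vx (i : Fin (2*m+1)) (j : Fin (2*M+1)) :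
    (FB2 (2*m+1) (2*M+1)).Adj (vv m M i j) (xx m M i) := by
  rw [FB2, SimpleGraph.fromRel_adj]
  exact ⟨by simp [vv, xx], Or.inl rfl⟩
lemma adj_uw (i : Fin (2*m+1)) (j : Fin (2*M+1)) :
    (FB2 (2*m+1) (2*M+1)).Adj (uu m M i j) (ww m M j) := by
  rw [FB2, SimpleGraph.fromRel_adj]
  exact ⟨by simp [uu, ww], Or.inl rfl⟩
lemma adj_vw (i : Fin (2*m+1)) (j : Fin (2*M+1)) :
    (FB2 (2*m+1) (2*M+1)).Adj (vv m M i j) (ww m M j) := by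
  rw [FB2, SimpleGraph.fromRel_adj]
  exact ⟨by simp [vv, ww], Or.inl rfl⟩
lemma adj_xw (i : Fin (2*m+1)) (j : Fin (2*M+1)) :
    (FB2 (2*m+1) (2*M+1)).Adj (xx m M i) (ww m M j) := by
  rw [FB2, SimpleGraph.fromRel_adj]
  exact ⟨by simp [xx, ww], Or.inl trivial⟩

lemma edgeSet_FB2 :
    (FB2 (2*m+1) (2*M+1)).edgeSet
      = (fun z : Fin 5 × Fin (2*m+1) × Fin (2*M+1) => Ed m M (z.1 : ℕ) z.2.1 z.2.2) '' Set.univ := by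
  ext e
  induction e using Sym2.ind with
  | _ a b =>
    simp only [SimpleGraph.mem_edgeSet, Set.image_univ, Set.mem_range]
    constructor
    · intro h
      rw [FB2, SimpleGraph.fromRel_adj] at h
      obtain ⟨hne, h | h⟩ := h
      · rcases a with ⟨i, j, k2⟩ | (i | j) <;> rcases b with ⟨i', j', k2'⟩ | (i' | j')
        all_goals simp_all
        · subst h
          fin_cases k2
          · exact ⟨⟨0, by omega⟩, i, j, by simp [Ed, uu, xx]⟩
          · exact ⟨⟨2, by omega⟩, i, j, by simp [Ed, vv, xx]⟩
        · subst h
          fin_cases k2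
          · exact ⟨⟨1, by omega⟩, i, j, by simp [Ed, uu, ww]⟩
          · exact ⟨⟨3, by omega⟩, i, j, by simp [Ed, vv, ww]⟩
        · exact ⟨⟨4, by omega⟩, i, j', by simp [Ed, xx, ww]⟩
      · rcases a with ⟨i, j, k2⟩ | (i | j) <;> rcases b with ⟨i', j', k2'⟩ | (i' | j')
        all_goals simp_all
        · subst h
          fin_cases k2'
          · exact ⟨⟨0, by omega⟩, i', j', by rw [Ed]; simp [uu, xx, Sym2.eq_swap]⟩
          · exact ⟨⟨2, by omega⟩, i', j', by rw [Ed]; simp [vv, xx, Sym2.eq_swap]⟩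
        · subst h
          fin_cases k2'
          · exact ⟨⟨1, by omega⟩, i', j', by rw [Ed]; simp [uu, ww, Sym2.eq_swap]⟩
          · exact ⟨⟨3, by omega⟩, i', j', by rw [Ed]; simp [vv, ww, Sym2.eq_swap]⟩
        · exact ⟨⟨4, by omega⟩, i', j, by rw [Ed]; simp [xx, ww, Sym2.eq_swap]⟩
    · rintro ⟨⟨k, i, j⟩, hz⟩
      fin_cases k <;> simp only [Ed, show ((0:Fin 5):ℕ) = 0 from rfl,
        show ((1:Fin 5):ℕ) = 1 from rfl, show ((2:Fin 5):ℕ) = 2 from rfl,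
        show ((3:Fin 5):ℕ) = 3 from rfl, show ((4:Fin 5):ℕ) = 4 from rfl,
        reduceIte] at hz
      · rcases Sym2.eq_iff.mp hz with ⟨rfl, rfl⟩ | ⟨rfl, rfl⟩
        · exact adj_ux m M i j
        · exact (adj_ux m M i j).symm
      · rcases Sym2.eq_iff.mp hz with ⟨rfl, rfl⟩ | ⟨rfl, rfl⟩
        · exact adj_uw m M i j
        · exact (adj_uw m M i j).symm
      · rcases Sym2.eq_iff.mp hz with ⟨rfl, rfl⟩ | ⟨rfl, rfl⟩
        · exact adj_vx m M i j
        · exact (adj_vx m M i j).symm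
      · rcases Sym2.eq_iff.mp hz with ⟨rfl, rfl⟩ | ⟨rfl, rfl⟩
        · exact adj_vw m M i j
        · exact (adj_vw m M i j).symm
      · rcases Sym2.eq_iff.mp hz with ⟨rfl, rfl⟩ | ⟨rfl, rfl⟩
        · exact adj_xw m M i j
        · exact (adj_xw m M i j).symm

lemma Ed_mem_edgeSet (k : ℕ) (hk : k < 5) (i : Fin (2*m+1)) (j : Fin (2*M+1)) :
    Ed m M k i j ∈ (FB2 (2*m+1) (2*M+1)).edgeSet := by
  rw [edgeSet_FB2]
  exact ⟨(⟨k, hk⟩, i, j), Set.mem_univ _, rfl⟩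

lemma incidence_u (i : Fin (2*m+1)) (j : Fin (2*M+1)) :
    (FB2 (2*m+1) (2*M+1)).incidenceSet (uu m M i j)
      = {Ed m M 0 i j, Ed m M 1 i j} := by
  ext e
  simp only [SimpleGraph.incidenceSet, Set.mem_sep_iff, Set.mem_insert_iff,
    Set.mem_singleton_iff]
  constructor
  · rintro ⟨he, hv⟩
    rw [edgeSet_FB2] at he
    obtain ⟨⟨k, i', j'⟩, -, hz⟩ := he
    subst hz
    fin_cases k <;> simp [Ed, Sym2.mem_iff, uu, vv, xx, ww] at hv
    · obtain ⟨rfl, rfl⟩ := hv; left; rfl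
    · obtain ⟨rfl, rfl⟩ := hv; right; rfl
  · rintro (rfl | rfl)
    · exact ⟨Ed_mem_edgeSet m M 0 (by omega) i j, by simp [Ed, uu, Sym2.mem_iff]⟩
    · exact ⟨Ed_mem_edgeSet m M 1 (by omega) i j, by simp [Ed, uu, Sym2.mem_iff]⟩

lemma incidence_v (i : Fin (2*m+1)) (j : Fin (2*M+1)) :
    (FB2 (2*m+1) (2*M+1)).incidenceSet (vv m M i j)
      = {Ed m M 2 i j, Ed m M 3 i j} := by
  ext e
  simp only [SimpleGraph.incidenceSet, Set.mem_sep_iff, Set.mem_insert_iff,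
    Set.mem_singleton_iff]
  constructor
  · rintro ⟨he, hv⟩
    rw [edgeSet_FB2] at he
    obtain ⟨⟨k, i', j'⟩, -, hz⟩ := he
    subst hz
    fin_cases k <;> simp [Ed, Sym2.mem_iff, uu, vv, xx, ww] at hv
    · obtain ⟨rfl, rfl⟩ := hv; left; rfl
    · obtain ⟨rfl, rfl⟩ := hv; right; rfl
  · rintro (rfl | rfl)
    · exact ⟨Ed_mem_edgeSet m M 2 (by omega) i j, by simp [Ed, vv, Sym2.mem_iff]⟩
    · exact ⟨Ed_mem_edgeSet m M 3 (by omega) i j, by simp [Ed, vv, Sym2.mem_iff]⟩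

def EdW (j : Fin (2*M+1)) (p : Fin (2*m+1) × Fin 3) : Sym2 (VT m M) :=
  Ed m M (if p.2 = 0 then 1 else if p.2 = 1 then 3 else 4) p.1 j

def EdX (i : Fin (2*m+1)) (p : Fin (2*M+1) × Fin 3) : Sym2 (VT m M) :=
  Ed m M (if p.2 = 0 then 0 else if p.2 = 1 then 2 else 4) i p.1

lemma incidence_w (j : Fin (2*M+1)) :
    (FB2 (2*m+1) (2*M+1)).incidenceSet (ww m M j) = Set.range (EdW m M j) := by
  ext e
  simp only [SimpleGraph.incidenceSet, Set.mem_sep_iff, Set.mem_range]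
  constructor
  · rintro ⟨he, hv⟩
    rw [edgeSet_FB2] at he
    obtain ⟨⟨k, i', j'⟩, -, hz⟩ := he
    subst hz
    fin_cases k <;> simp [Ed, Sym2.mem_iff, uu, vv, xx, ww] at hv
    · obtain rfl := hv; exact ⟨(i', 0), rfl⟩
    · obtain rfl := hv; exact ⟨(i', 1), rfl⟩
    · obtain rfl := hv; exact ⟨(i', 2), rfl⟩
  · rintro ⟨⟨i', t⟩, rfl⟩
    fin_cases t
    · exact ⟨Ed_mem_edgeSet m M 1 (by omega) i' j, by simp [EdW, Ed, ww, Sym2.mem_iff]⟩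
    · exact ⟨Ed_mem_edgeSet m M 3 (by omega) i' j, by simp [EdW, Ed, ww, Sym2.mem_iff]⟩
    · exact ⟨Ed_mem_edgeSet m M 4 (by omega) i' j, by simp [EdW, Ed, ww, Sym2.mem_iff]⟩

lemma incidence_x (i : Fin (2*m+1)) :
    (FB2 (2*m+1) (2*M+1)).incidenceSet (xx m M i) = Set.range (EdX m M i) := by
  ext e
  simp only [SimpleGraph.incidenceSet, Set.mem_sep_iff, Set.mem_range]
  constructor
  · rintro ⟨he, hv⟩
    rw [edgeSet_FB2] at he
    obtain ⟨⟨k, i', j'⟩, -, hz⟩ := he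
    subst hz
    fin_cases k <;> simp [Ed, Sym2.mem_iff, uu, vv, xx, ww] at hv
    · obtain rfl := hv; exact ⟨(j', 0), rfl⟩
    · obtain rfl := hv; exact ⟨(j', 1), rfl⟩
    · obtain rfl := hv; exact ⟨(j', 2), rfl⟩
  · rintro ⟨⟨j', t⟩, rfl⟩
    fin_cases t
    · exact ⟨Ed_mem_edgeSet m M 0 (by omega) i j', by simp [EdX, Ed, xx, Sym2.mem_iff]⟩
    · exact ⟨Ed_mem_edgeSet m M 2 (by omega) i j', by simp [EdX, Ed, xx, Sym2.mem_iff]⟩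
    · exact ⟨Ed_mem_edgeSet m M 4 (by omega) i j', by simp [EdX, Ed, xx, Sym2.mem_iff]⟩

lemma xsum {m i : ℕ} (hi : i < 2*m+1) : 2*m - xf m i + xg m i + i = 3*m := by
  unfold xf xg; split_ifs <;> omega

def Aval : ℕ := 5*((2*m+1)*(2*M+1)) + 1
def Bval : ℕ := (2*m+1) * (5*((2*m+1)*(2*M+1)) + 3 + 3*m + 3*(M*(2*m+1)))
def Cval : ℕ := (2*M+1) * (7*((2*m+1)*(2*M+1)) + 3 + 3*m + 3*(M*(2*m+1)))

lemma fplus_u (i : Fin (2*m+1)) (j : Fin (2*M+1)) :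
    fplus (FB2 (2*m+1) (2*M+1)) (fC m M) (uu m M i j) = Aval m M := by
  unfold fplus
  rw [incidence_u]
  have hne : Ed m M 0 i j ≠ Ed m M 1 i j := by simp [Ed, Sym2.eq_iff, uu, xx, ww]
  have hset : ({Ed m M 0 i j, Ed m M 1 i j} : Set (Sym2 (VT m M)))
      = (↑({Ed m M 0 i j, Ed m M 1 i j} : Finset (Sym2 (VT m M)))) := by simp
  rw [hset, finsum_mem_coe_finset, Finset.sum_pair hne, fC_Ed0, fC_Ed1]
  have hi := i.isLt; have hj := j.isLt
  have h1 := xf_lt (m := m) hi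
  unfold Lab dig1 dig2 blk Aval
  norm_num
  have e1 : (2*m+1)*(2*M-(j:ℕ)) + (2*m+1)*(j:ℕ) = (2*m+1)*(2*M) := by
    rw [← Nat.mul_add]; congr 1; omega
  have e2 : (2*m+1)*(2*M+1) = (2*m+1)*(2*M) + (2*m+1) := by ring
  have e3 : 2*m - xf m (i:ℕ) + xf m (i:ℕ) = 2*m := by omega
  linarith

lemma fplus_v (i : Fin (2*m+1)) (j : Fin (2*M+1)) :
    fplus (FB2 (2*m+1) (2*M+1)) (fC m M) (vv m M i j) = Aval m M := by
  unfold fplus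
  rw [incidence_v]
  have hne : Ed m M 2 i j ≠ Ed m M 3 i j := by simp [Ed, Sym2.eq_iff, vv, xx, ww]
  have hset : ({Ed m M 2 i j, Ed m M 3 i j} : Set (Sym2 (VT m M)))
      = (↑({Ed m M 2 i j, Ed m M 3 i j} : Finset (Sym2 (VT m M)))) := by simp
  rw [hset, finsum_mem_coe_finset, Finset.sum_pair hne, fC_Ed2, fC_Ed3]
  have hi := i.isLt; have hj := j.isLt
  have h1 : xg m (i:ℕ) + xh m (i:ℕ) = 2*m := by unfold xg xh; split_ifs <;> omega
  unfold Lab dig1 dig2 blk Aval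
  norm_num
  have e1 : (2*m+1)*(2*M-(j:ℕ)) + (2*m+1)*(j:ℕ) = (2*m+1)*(2*M) := by
    rw [← Nat.mul_add]; congr 1; omega
  have e2 : (2*m+1)*(2*M+1) = (2*m+1)*(2*M) + (2*m+1) := by ring
  linarith

lemma EdW_inj (j : Fin (2*M+1)) : Function.Injective (EdW m M j) := by
  rintro ⟨i, t⟩ ⟨i', t'⟩ h
  fin_cases t <;> fin_cases t' <;>
    simp_all [EdW, Ed, Sym2.eq_iff, uu, vv, xx, ww, Prod.ext_iff]

lemma EdX_inj (i : Fin (2*m+1)) : Function.Injective (EdX m M i) := by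
  rintro ⟨j, t⟩ ⟨j', t'⟩ h
  fin_cases t <;> fin_cases t' <;>
    simp_all [EdX, Ed, Sym2.eq_iff, uu, vv, xx, ww, Prod.ext_iff]

lemma fplus_w (hm : 1 ≤ m) (j : Fin (2*M+1)) :
    fplus (FB2 (2*m+1) (2*M+1)) (fC m M) (ww m M j) = Bval m M := by
  unfold fplus
  rw [incidence_w]
  rw [show Set.range (EdW m M j) = ↑(Finset.image (EdW m M j) Finset.univ) from by simp]
  rw [finsum_mem_coe_finset, Finset.sum_image (fun a _ b _ h => EdW_inj m M j h)]
  have hsplit : ∑ p : Fin (2*m+1) × Fin 3, fC m M (EdW m M j p)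
      = ∑ i : Fin (2*m+1), (Lab m M 1 i j + Lab m M 3 i j + Lab m M 4 i j) := by
    rw [Fintype.sum_prod_type]
    refine Finset.sum_congr rfl fun i _ => ?_
    rw [Fin.sum_univ_three]
    have e0 : EdW m M j (i, 0) = Ed m M 1 i j := rfl
    have e1 : EdW m M j (i, 1) = Ed m M 3 i j := rfl
    have e2 : EdW m M j (i, 2) = Ed m M 4 i j := rfl
    rw [e0, e1, e2, fC_Ed1, fC_Ed3, fC_Ed4]
  rw [hsplit]
  rw [Fin.sum_univ_eq_sum_range (fun i => Lab m M 1 i j + Lab m M 3 i j + Lab m M 4 i j) (2*m+1)]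
  have hterm : ∀ i ∈ Finset.range (2*m+1),
      Lab m M 1 i (j:ℕ) + Lab m M 3 i (j:ℕ) + Lab m M 4 i (j:ℕ)
        = (3 + (2*m+1)*(2*M) + 5*((2*m+1)*(2*M+1))) + (xf m i + (xh m i + (i + (2*m+1) * tau M i (j:ℕ)))) := by
    intro i hi
    rw [Finset.mem_range] at hi
    have hj := j.isLt
    unfold Lab dig1 dig2 blk
    norm_num
    have e1 : (2*m+1)*(2*M-(j:ℕ)) + (2*m+1)*(j:ℕ) = (2*m+1)*(2*M) := by
      rw [← Nat.mul_add]; congr 1; omega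
    linarith
  rw [Finset.sum_congr rfl hterm, Finset.sum_add_distrib, Finset.sum_const,
    Finset.card_range, smul_eq_mul, Finset.sum_add_distrib, sum_xf,
    Finset.sum_add_distrib, sum_xh, Finset.sum_add_distrib, sum_id',
    ← Finset.mul_sum, tau_col hm j.isLt]
  unfold Bval
  ring

lemma fplus_x (i : Fin (2*m+1)) :
    fplus (FB2 (2*m+1) (2*M+1)) (fC m M) (xx m M i) = Cval m M := by
  unfold fplus
  rw [incidence_x]
  rw [show Set.range (EdX m M i) = ↑(Finset.image (EdX m M i) Finset.univ) from by simp]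
  rw [finsum_mem_coe_finset, Finset.sum_image (fun a _ b _ h => EdX_inj m M i h)]
  have hsplit : ∑ p : Fin (2*M+1) × Fin 3, fC m M (EdX m M i p)
      = ∑ j : Fin (2*M+1), (Lab m M 0 i j + Lab m M 2 i j + Lab m M 4 i j) := by
    rw [Fintype.sum_prod_type]
    refine Finset.sum_congr rfl fun j _ => ?_
    rw [Fin.sum_univ_three]
    have e0 : EdX m M i (j, 0) = Ed m M 0 i j := rfl
    have e1 : EdX m M i (j, 1) = Ed m M 2 i j := rfl
    have e2 : EdX m M i (j, 2) = Ed m M 4 i j := rfl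
    rw [e0, e1, e2, fC_Ed0, fC_Ed2, fC_Ed4]
  rw [hsplit]
  rw [Fin.sum_univ_eq_sum_range (fun j => Lab m M 0 i j + Lab m M 2 i j + Lab m M 4 i j) (2*M+1)]
  have hterm : ∀ j ∈ Finset.range (2*M+1),
      Lab m M 0 (i:ℕ) j + Lab m M 2 (i:ℕ) j + Lab m M 4 (i:ℕ) j
        = (3 + (2*m+1)*(2*M) + 7*((2*m+1)*(2*M+1)) + 3*m) + (2*m+1) * tau M (i:ℕ) j := by
    intro j hj
    rw [Finset.mem_range] at hj
    have hi := i.isLt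
    have hx := xsum (m := m) (i := (i:ℕ)) hi
    unfold Lab dig1 dig2 blk
    norm_num
    have e1 : (2*m+1)*(2*M-j) + (2*m+1)*j = (2*m+1)*(2*M) := by
      rw [← Nat.mul_add]; congr 1; omega
    linarith
  rw [Finset.sum_congr rfl hterm, Finset.sum_add_distrib, Finset.sum_const,
    Finset.card_range, smul_eq_mul, ← Finset.mul_sum, tau_row i.isLt]
  unfold Cval
  ring

lemma ncard_Icc' (n : ℕ) : (Set.Icc 1 n).ncard = n := by
  rw [← Finset.coe_Icc, Set.ncard_coe_finset, Nat.card_Icc]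
  omega

lemma labZ_injective :
    Function.Injective (fun z : Fin 5 × Fin (2*m+1) × Fin (2*M+1) =>
      Lab m M z.1 z.2.1 z.2.2) := by
  rintro ⟨k, i, j⟩ ⟨k', i', j'⟩ h
  obtain ⟨h1, h2, h3⟩ := lab_inj m M k.isLt i.isLt j.isLt k'.isLt i'.isLt j'.isLt h
  simp_all [Prod.ext_iff, Fin.ext_iff]

lemma image_lab :
    (fun z : Fin 5 × Fin (2*m+1) × Fin (2*M+1) => Lab m M z.1 z.2.1 z.2.2) '' Set.univ
      = Set.Icc 1 (5*((2*m+1)*(2*M+1))) := by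
  apply Set.eq_of_subset_of_ncard_le
  · rintro y ⟨⟨k, i, j⟩, -, rfl⟩
    exact lab_mem m M k i j i.isLt j.isLt
  · rw [Set.ncard_image_of_injective _ (labZ_injective m M), ncard_Icc', Set.ncard_univ]
    rw [Nat.card_eq_fintype_card]
    simp only [Fintype.card_prod, Fintype.card_fin]
    exact le_of_eq (by ring)
  · exact Set.finite_Icc _ _

lemma fC_Ed_all (z : Fin 5 × Fin (2*m+1) × Fin (2*M+1)) :
    fC m M (Ed m M (z.1 : ℕ) z.2.1 z.2.2) = Lab m M z.1 z.2.1 z.2.2 := by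
  obtain ⟨k, i, j⟩ := z
  fin_cases k
  · exact fC_Ed0 m M i j
  · exact fC_Ed1 m M i j
  · exact fC_Ed2 m M i j
  · exact fC_Ed3 m M i j
  · exact fC_Ed4 m M i j

lemma edge_image :
    fC m M '' (FB2 (2*m+1) (2*M+1)).edgeSet = Set.Icc 1 (5*((2*m+1)*(2*M+1))) := by
  rw [edgeSet_FB2, Set.image_image]
  rw [Set.image_congr (fun z _ => fC_Ed_all m M z)]
  exact image_lab m M

lemma fC_injOn : Set.InjOn (fC m M) (FB2 (2*m+1) (2*M+1)).edgeSet := by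
  intro e he e' he' h
  rw [edgeSet_FB2] at he he'
  obtain ⟨z, -, rfl⟩ := he
  obtain ⟨z', -, rfl⟩ := he'
  rw [fC_Ed_all m M z, fC_Ed_all m M z'] at h
  rw [labZ_injective m M h]

lemma edge_ncard : (FB2 (2*m+1) (2*M+1)).edgeSet.ncard = 5*((2*m+1)*(2*M+1)) := by
  rw [← Set.ncard_image_of_injOn (fC_injOn m M), edge_image, ncard_Icc']

lemma fC_bijOn :
    Set.BijOn (fC m M) (FB2 (2*m+1) (2*M+1)).edgeSet
      (Set.Icc 1 (FB2 (2*m+1) (2*M+1)).edgeSet.ncard) := by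
  rw [edge_ncard]
  refine ⟨fun e he => ?_, fC_injOn m M, ?_⟩
  · rw [← edge_image m M]; exact Set.mem_image_of_mem _ he
  · rw [← edge_image m M]; exact Set.surjOn_image _ _

lemma A_ne_B : Aval m M ≠ Bval m M := by
  unfold Aval Bval; nlinarith [sq_nonneg m, sq_nonneg M]

lemma A_ne_C : Aval m M ≠ Cval m M := by
  unfold Aval Cval; nlinarith [sq_nonneg m, sq_nonneg M]

lemma B_ne_C (hm : 1 ≤ m) (hM : 1 ≤ M) : Bval m M ≠ Cval m M := by
  intro h
  have h2 : ((Bval m M : ℤ)) = ((Cval m M : ℤ)) := by exact_mod_cast h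
  unfold Bval Cval at h2
  push_cast at h2
  have key : ((2*(m:ℤ)+1) - (2*(M:ℤ)+1)) * (13*(2*(m:ℤ)+1)*(2*(M:ℤ)+1) + 3)
      = 4*(2*(m:ℤ)+1)*(2*(M:ℤ)+1)*(2*(M:ℤ)+1) := by linear_combination 2*h2
  have hmz : (1:ℤ) ≤ m := by exact_mod_cast hm
  have hMz : (1:ℤ) ≤ M := by exact_mod_cast hM
  rcases lt_trichotomy (m:ℤ) (M:ℤ) with hlt | heq | hgt
  · have hpos : (0:ℤ) < 13*(2*(m:ℤ)+1)*(2*(M:ℤ)+1) + 3 := by positivity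
    have hneg : (2*(m:ℤ)+1) - (2*(M:ℤ)+1) < 0 := by linarith
    have hL : ((2*(m:ℤ)+1) - (2*(M:ℤ)+1)) * (13*(2*(m:ℤ)+1)*(2*(M:ℤ)+1) + 3) < 0 :=
      mul_neg_of_neg_of_pos hneg hpos
    have hR : (0:ℤ) < 4*(2*(m:ℤ)+1)*(2*(M:ℤ)+1)*(2*(M:ℤ)+1) := by positivity
    linarith
  · rw [heq] at key
    ring_nf at key
    have hR : (0:ℤ) < 4*(2*(M:ℤ)+1)*(2*(M:ℤ)+1)*(2*(M:ℤ)+1) := by positivity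
    nlinarith [key]
  · have hdvd : (2*(m:ℤ)+1) ∣ 3*(2*(M:ℤ)+1) :=
      ⟨13*(2*(m:ℤ)+1)*(2*(M:ℤ)+1) + 3 - 17*(2*(M:ℤ)+1)*(2*(M:ℤ)+1),
        by linear_combination -key⟩
    obtain ⟨t, ht⟩ := hdvd
    have ht1 : 0 < t := by
      by_contra hc
      push_neg at hc
      have h5 : (2*(m:ℤ)+1) * t ≤ 0 := mul_nonpos_of_nonneg_of_nonpos (by positivity) hc
      linarith
    have ht2 : t < 3 := by
      by_contra hc
      push_neg at hc
      have h5 : (2*(m:ℤ)+1) * 3 ≤ (2*(m:ℤ)+1) * t :=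
        mul_le_mul_of_nonneg_left hc (by positivity)
      linarith
    interval_cases t
    · have hx3 : (2*(m:ℤ)+1) = 3*(2*(M:ℤ)+1) := by linarith
      rw [hx3] at key
      have hy : (0:ℤ) < 2*(M:ℤ)+1 := by positivity
      nlinarith [key, mul_pos (mul_pos hy hy) hy]
    · omega

lemma fplus_inl (p : Fin (2*m+1) × Fin (2*M+1) × Fin 2) :
    fplus (FB2 (2*m+1) (2*M+1)) (fC m M) (Sum.inl p) = Aval m M := by
  obtain ⟨i, j, k2⟩ := p
  fin_cases k2
  · exact fplus_u m M i j
  · exact fplus_v m M i j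

lemma range_fplus (hm : 1 ≤ m) :
    Set.range (fplus (FB2 (2*m+1) (2*M+1)) (fC m M))
      = {Aval m M, Bval m M, Cval m M} := by
  ext y
  simp only [Set.mem_range, Set.mem_insert_iff, Set.mem_singleton_iff]
  constructor
  · rintro ⟨v, rfl⟩
    rcases v with p | (i | j)
    · left; exact fplus_inl m M p
    · right; right; exact fplus_x m M i
    · right; left; exact fplus_w m M hm j
  · rintro (rfl | rfl | rfl)
    · exact ⟨uu m M 0 0, fplus_u m M 0 0⟩
    · exact ⟨ww m M 0, fplus_w m M hm 0⟩
    · exact ⟨xx m M 0, fplus_x m M 0⟩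

lemma adj_distinct (hm : 1 ≤ m) (hM : 1 ≤ M) :
    ∀ ⦃a b : VT m M⦄, (FB2 (2*m+1) (2*M+1)).Adj a b →
      fplus (FB2 (2*m+1) (2*M+1)) (fC m M) a ≠ fplus (FB2 (2*m+1) (2*M+1)) (fC m M) b := by
  intro a b hab
  rcases a with p | (i | j) <;> rcases b with p' | (i' | j')
  · rw [FB2, SimpleGraph.fromRel_adj] at hab; simp at hab
  · rw [fplus_inl m M p, show (Sum.inr (Sum.inl i') : VT m M) = xx m M i' from rfl,
      fplus_x m M i']
    exact A_ne_C m M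
  · rw [fplus_inl m M p, show (Sum.inr (Sum.inr j') : VT m M) = ww m M j' from rfl,
      fplus_w m M hm j']
    exact A_ne_B m M
  · rw [fplus_inl m M p', show (Sum.inr (Sum.inl i) : VT m M) = xx m M i from rfl,
      fplus_x m M i]
    exact (A_ne_C m M).symm
  · rw [FB2, SimpleGraph.fromRel_adj] at hab; simp at hab
  · rw [show (Sum.inr (Sum.inl i) : VT m M) = xx m M i from rfl, fplus_x m M i,
      show (Sum.inr (Sum.inr j') : VT m M) = ww m M j' from rfl, fplus_w m M hm j']
    exact fun h => (B_ne_C m M hm hM) h.symm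
  · rw [fplus_inl m M p', show (Sum.inr (Sum.inr j) : VT m M) = ww m M j from rfl,
      fplus_w m M hm j]
    exact (A_ne_B m M).symm
  · rw [show (Sum.inr (Sum.inl i') : VT m M) = xx m M i' from rfl, fplus_x m M i',
      show (Sum.inr (Sum.inr j) : VT m M) = ww m M j from rfl, fplus_w m M hm j]
    exact B_ne_C m M hm hM
  · rw [FB2, SimpleGraph.fromRel_adj] at hab; simp at hab

lemma ncard_ABC (hm : 1 ≤ m) (hM : 1 ≤ M) :
    ({Aval m M, Bval m M, Cval m M} : Set ℕ).ncard = 3 := by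
  rw [Set.ncard_insert_of_notMem (by
      simp only [Set.mem_insert_iff, Set.mem_singleton_iff]
      push_neg
      exact ⟨A_ne_B m M, A_ne_C m M⟩) (Set.toFinite _),
    Set.ncard_insert_of_notMem (by simpa using B_ne_C m M hm hM) (Set.toFinite _),
    Set.ncard_singleton]

theorem chiLA_FB2' (m M : ℕ) (hm : 1 ≤ m) (hM : 1 ≤ M) :
    chiLA (FB2 (2*m+1) (2*M+1)) = 3 := by
  unfold chiLA
  have hmem : 3 ∈ {c : ℕ | ∃ f, IsLocalAntimagic (FB2 (2*m+1) (2*M+1)) f ∧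
      (Set.range (fplus (FB2 (2*m+1) (2*M+1)) f)).ncard = c} := by
    refine ⟨fC m M, ⟨fC_bijOn m M, adj_distinct m M hm hM⟩, ?_⟩
    rw [range_fplus m M hm, ncard_ABC m M hm hM]
  refine le_antisymm (Nat.sInf_le hmem) (le_csInf ⟨3, hmem⟩ ?_)
  rintro c ⟨f, ⟨-, hadj⟩, rfl⟩
  have h1 := hadj (adj_uw m M 0 0)
  have h2 := hadj (adj_ux m M 0 0)
  have h3 := hadj (adj_xw m M 0 0)
  set G := FB2 (2*m+1) (2*M+1)
  set p := fplus G f (uu m M 0 0)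
  set q := fplus G f (ww m M 0)
  set t := fplus G f (xx m M 0)
  have hsub : ({p, t, q} : Set ℕ) ⊆ Set.range (fplus G f) := by
    rintro y (rfl | rfl | rfl)
    exacts [⟨_, rfl⟩, ⟨_, rfl⟩, ⟨_, rfl⟩]
  have h33 : ({p, t, q} : Set ℕ).ncard = 3 := by
    rw [Set.ncard_insert_of_notMem (by
        simp only [Set.mem_insert_iff, Set.mem_singleton_iff]
        push_neg
        exact ⟨h2, h1⟩) (Set.toFinite _),
      Set.ncard_insert_of_notMem (by simpa using h3) (Set.toFinite _),
      Set.ncard_singleton]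
  calc 3 = ({p, t, q} : Set ℕ).ncard := h33.symm
    _ ≤ (Set.range (fplus G f)).ncard := Set.ncard_le_ncard hsub (Set.finite_range _)

end Construction


/-- For all odd `r, s ≥ 3`, `χ_{la}(FB²(r,s)) = 3`. -/
theorem chiLA_FB2 (r s : ℕ) (hrodd : Odd r) (hsodd : Odd s)
    (hr : 3 ≤ r) (hs : 3 ≤ s) : chiLA (FB2 r s) = 3 := by
  obtain ⟨m, hm'⟩ := hrodd
  obtain ⟨M, hM'⟩ := hsodd
  have hm2 : r = 2*m+1 := by omega
  have hM2 : s = 2*M+1 := by omega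
  subst hm2 hM2
  exact chiLA_FB2' m M (by omega) (by omega)

end LocalAntimagic
end
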